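/- arXiv:2311.02635 — 10 statements merged into one kernel-verified Lean document; each statement's English description precedes it below -/
import Mathlib

section
/- The bracket operations [d_n,d_m]=(m-n)d_{n+m}+δ_{n,-m}(n³-n)/12·C, [d_n,I_m]=m·I_{m+n}+δ_{n,-m}(n²+n)·C_D, [I_n,I_m]=n·δ_{n,-m}·C_I, with C, C_D, C_I central, define a Lie algebra structure (the Jacobi identity holds) on the vector space with basis {d_n, I_n : n ∈ ℤ} ∪ {C, C_D, C_I}. -/
/-- Basis of the Heisenberg–Virasoro Lie algebra. -/
inductive HVBasis : Type
  | d : ℤ → HVBasis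
  | i : ℤ → HVBasis
  | c : HVBasis
  | cd : HVBasis
  | ci : HVBasis

/-- The underlying vector space: formal ℂ-linear combinations of the basis. -/
abbrev HV : Type := HVBasis →₀ ℂ

/-- Basis vectors. -/
noncomputable def e (x : HVBasis) : HV := Finsupp.single x 1

/-- The bracket on basis elements. -/
noncomputable def bb : HVBasis → HVBasis → HV
  | .d n, .d m => ((m : ℂ) - (n : ℂ)) • e (.d (n + m)) +
      (if n = -m then ((n ^ 3 - n : ℤ) : ℂ) / 12 else 0) • e .c
  | .d n, .i m => (m : ℂ) • e (.i (m + n)) +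
      (if n = -m then ((n ^ 2 + n : ℤ) : ℂ) else 0) • e .cd
  | .i n, .d m => -((n : ℂ) • e (.i (n + m)) +
      (if m = -n then ((m ^ 2 + m : ℤ) : ℂ) else 0) • e .cd)
  | .i n, .i m => (if n = -m then (n : ℂ) else 0) • e .ci
  | _, _ => 0

/-- The bracket extended bilinearly to all of HV. -/
noncomputable def br (x y : HV) : HV :=
  x.sum fun i a => y.sum fun j b => (a * b) • bb i j

/-!
The bracket `br` is the bilinear extension of `bb`, so both identities only need to be checked
on basis vectors. The Jacobiator is invariant under cyclic rotation of its arguments and vanishes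
as soon as one argument is central, so only the triples `d d d`, `d d i`, `d i i` and `i i i`
remain. In each of them every Kronecker delta that occurs is `δ_{n+m+p,0}`, and the two cases
`n + m + p = 0` and `n + m + p ≠ 0` are polynomial identities; the first one is where the
cocycles `(n³ - n)/12` and `n² + n` are checked.
-/

section Jacobiator

variable {R M : Type*} [CommRing R] [AddCommGroup M] [Module R M]

def jacobiator (B : M →ₗ[R] M →ₗ[R] M) (x y z : M) : M :=
  B x (B y z) + B y (B z x) + B z (B x y)

variable (B : M →ₗ[R] M →ₗ[R] M)

theorem jacobiator_cycle (x y z : M) : jacobiator B x y z = jacobiator B y z x := by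
  unfold jacobiator; abel

theorem jacobiator_eq_zero_of_central {z : M} (hzl : ∀ x, B z x = 0) (hzr : ∀ x, B x z = 0)
    (x y : M) : jacobiator B x y z = 0 := by
  simp [jacobiator, hzl, hzr]

variable {ι : Type*} (b : Module.Basis ι R M)

theorem jacobiator_eq_zero_of_basis_left {y z : M} (h : ∀ i, jacobiator B (b i) y z = 0)
    (x : M) : jacobiator B x y z = 0 := by
  induction b.mem_span x using Submodule.span_induction with
  | mem x hx => obtain ⟨i, rfl⟩ := hx; exact h i
  | zero => simp [jacobiator]
  | add x x' _ _ hx hx' =>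
    simp only [jacobiator, map_add, LinearMap.add_apply] at *
    linear_combination (norm := module) hx + hx'
  | smul a x _ hx =>
    simp only [jacobiator, map_smul, LinearMap.smul_apply] at *
    linear_combination (norm := module) a • hx

theorem jacobiator_eq_zero_of_basis (h : ∀ i j k, jacobiator B (b i) (b j) (b k) = 0)
    (x y z : M) : jacobiator B x y z = 0 := by
  refine jacobiator_eq_zero_of_basis_left B b (fun i => ?_) x
  rw [jacobiator_cycle]
  refine jacobiator_eq_zero_of_basis_left B b (fun j => ?_) y
  rw [jacobiator_cycle]
  refine jacobiator_eq_zero_of_basis_left B b (fun k => ?_) z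
  rw [jacobiator_cycle]
  exact h i j k

theorem eq_neg_flip_of_basis {N : Type*} [AddCommGroup N] [Module R N]
    (B : M →ₗ[R] M →ₗ[R] N) (h : ∀ i j, B (b i) (b j) = -B (b j) (b i)) (x y : M) :
    B x y = -B y x :=
  LinearMap.congr_fun₂ (LinearMap.ext_basis b b h : B = -B.flip) x y

end Jacobiator

noncomputable def brₗ : HV →ₗ[ℂ] HV →ₗ[ℂ] HV :=
  Finsupp.lift _ ℂ HVBasis fun i => Finsupp.lift HV ℂ HVBasis (bb i)

theorem br_eq_brₗ (x y : HV) : br x y = brₗ x y := by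
  simp only [br, brₗ, Finsupp.lift_apply, Finsupp.sum, LinearMap.sum_apply, LinearMap.smul_apply,
    Finset.smul_sum, smul_smul]

theorem brₗ_e (i j : HVBasis) : brₗ (e i) (e j) = bb i j := by
  simp [brₗ, e]

theorem coe_basisSingleOne_eq_e : ⇑(Finsupp.basisSingleOne : Module.Basis HVBasis ℂ HV) = e := rfl

theorem bb_skew (i j : HVBasis) : bb i j = -bb j i := by
  obtain n | n | _ | _ | _ := i <;> obtain m | m | _ | _ | _ := j <;>
    simp only [bb, neg_zero, neg_neg]
  case d.d =>
    rw [add_comm m n]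
    simp only [show m = -n ↔ n = -m by omega]
    split_ifs with h
    · subst h; push_cast; module
    · module
  case i.i =>
    simp only [show m = -n ↔ n = -m by omega]
    split_ifs with h
    · subst h; module
    · module

theorem brₗ_skew (x y : HV) : brₗ x y = -brₗ y x :=
  eq_neg_flip_of_basis Finsupp.basisSingleOne brₗ
    (by simpa only [coe_basisSingleOne_eq_e, brₗ_e] using bb_skew) x y

theorem brₗ_e_eq_zero {z : HVBasis} (hz : ∀ j, bb z j = 0) (x : HV) : brₗ (e z) x = 0 := by
  simp [brₗ, e, hz]

theorem jacobiator_brₗ_e_of_central {z : HVBasis} (hz : ∀ j, bb z j = 0) (x y : HV) :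
    jacobiator brₗ x y (e z) = 0 :=
  jacobiator_eq_zero_of_central brₗ (brₗ_e_eq_zero hz)
    (fun x => by rw [brₗ_skew, brₗ_e_eq_zero hz, neg_zero]) x y

theorem jacobiator_d_d_d (n m p : ℤ) : jacobiator brₗ (e (.d n)) (e (.d m)) (e (.d p)) = 0 := by
  simp only [jacobiator, brₗ_e, bb, map_add, map_smul, smul_zero, add_zero]
  rw [show m + (p + n) = n + (m + p) by ring, show p + (n + m) = n + (m + p) by ring]
  simp only [show m = -(p + n) ↔ n = -(m + p) by omega, show p = -(n + m) ↔ n = -(m + p) by omega]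
  split_ifs with h
  · subst h; push_cast; module
  · push_cast; module

theorem jacobiator_d_d_i (n m p : ℤ) : jacobiator brₗ (e (.d n)) (e (.d m)) (e (.i p)) = 0 := by
  simp only [jacobiator, brₗ_e, bb, map_add, map_smul, map_neg, smul_zero, add_zero]
  rw [show p + m + n = p + (n + m) by ring, show p + n + m = p + (n + m) by ring]
  simp only [show n = -(p + m) ↔ p = -(n + m) by omega, show m = -(p + n) ↔ p = -(n + m) by omega,
    show n + m = -p ↔ p = -(n + m) by omega]
  split_ifs with h
  · subst h; push_cast; module
  · push_cast; module

theorem jacobiator_d_i_i (n m p : ℤ) : jacobiator brₗ (e (.d n)) (e (.i m)) (e (.i p)) = 0 := by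
  simp only [jacobiator, brₗ_e, bb, map_add, map_smul, map_neg, smul_zero, add_zero]
  simp only [show p = -(m + n) ↔ m = -(p + n) by omega]
  split_ifs <;> module

theorem jacobiator_brₗ_e : ∀ u v w : HVBasis, jacobiator brₗ (e u) (e v) (e w) = 0
  | .d n, .d m, .d p => jacobiator_d_d_d n m p
  | .d n, .d m, .i p => jacobiator_d_d_i n m p
  | .d n, .i m, .d p => by rw [jacobiator_cycle, jacobiator_cycle]; exact jacobiator_d_d_i p n m
  | .i n, .d m, .d p => by rw [jacobiator_cycle]; exact jacobiator_d_d_i m p n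
  | .d n, .i m, .i p => jacobiator_d_i_i n m p
  | .i n, .d m, .i p => by rw [jacobiator_cycle]; exact jacobiator_d_i_i m p n
  | .i n, .i m, .d p => by rw [jacobiator_cycle, jacobiator_cycle]; exact jacobiator_d_i_i p n m
  | .i n, .i m, .i p => by simp only [jacobiator, brₗ_e, bb, map_smul, smul_zero, add_zero]
  | _, _, .c | _, _, .cd | _, _, .ci => jacobiator_brₗ_e_of_central (by simp [bb]) _ _
  | _, .c, _ | _, .cd, _ | _, .ci, _ => by
    rw [jacobiator_cycle, jacobiator_cycle]; exact jacobiator_brₗ_e_of_central (by simp [bb]) _ _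
  | .c, _, _ | .cd, _, _ | .ci, _, _ => by
    rw [jacobiator_cycle]; exact jacobiator_brₗ_e_of_central (by simp [bb]) _ _

/-- The bracket is skew-symmetric and satisfies the Jacobi identity, i.e. it
defines a Lie algebra structure on HV. -/
theorem stmt0 :
    (∀ x y : HV, br x y = - br y x) ∧
    (∀ x y z : HV, br x (br y z) + br y (br z x) + br z (br x y) = 0) := by
  refine ⟨fun x y => ?_, fun x y z => ?_⟩
  · simp only [br_eq_brₗ]
    exact brₗ_skew x y
  · simp only [br_eq_brₗ]
    exact jacobiator_eq_zero_of_basis brₗ Finsupp.basisSingleOne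
      (by simpa only [coe_basisSingleOne_eq_e] using jacobiator_brₗ_e) x y z
end

section
/- The intermediate series module V(α,β,F) over the Heisenberg–Virasoro algebra is reducible if and only if F = 0, α ∈ ℤ, and β ∈ {0,1}. -/
/-- Action of the basis elements of HV on the vector space with basis
`{v_{α+k} : k ∈ ℤ}` (a basis vector `v_{α+k}` is `Finsupp.single k 1`). -/
noncomputable def actB (α β F : ℂ) : HVBasis → (ℤ →₀ ℂ) → (ℤ →₀ ℂ)
  | .d i, v => v.sum fun k c => (c * (α + (k : ℂ) + β * (i : ℂ))) • Finsupp.single (k + i) (1 : ℂ)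
  | .i i, v => v.sum fun k c => (c * F) • Finsupp.single (k + i) (1 : ℂ)
  | _, _ => 0

/-- The induced action of HV. -/
noncomputable def ρ (α β F : ℂ) (x : HV) (v : ℤ →₀ ℂ) : ℤ →₀ ℂ :=
  x.sum fun i a => a • actB α β F i v

/-!
`d₀` acts diagonally on the basis with the pairwise distinct eigenvalues `α + k`, so every
invariant subspace `W` is spanned by the basis vectors `v_{α+k}` it contains. If `v_{α+k} ∈ W`
and `v_{α+m} ∉ W`, then `I_{m-k}` and `d_{m-k}` must kill `v_{α+k}`, i.e. `F = 0` and
`α + k + β (m - k) = 0`. Two such relations (from two basis vectors in `W`, or from two outside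
it) force `β ∈ {0, 1}` and `α ∈ ℤ`. Conversely, when `F = 0` and `α = n ∈ ℤ`, the vector `v_0` is
killed by everything if `β = 0` and lies outside the image of every operator if `β = 1`, so
`ℂ v_0`, respectively the span of the other `v_k`, is invariant.
-/

open Finsupp

lemma Finsupp.sum_smul_single_add_apply {G R : Type*} [AddGroup G] [Semiring R] (v : G →₀ R)
    (g : G → R → R) (i m : G) (hg : g (m - i) 0 = 0) :
    (v.sum fun k c => g k c • single (k + i) (1 : R)) m = g (m - i) (v (m - i)) := by
  rw [sum_apply, sum_eq_single (m - i)]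
  · simp
  · intro k _ hk
    simp [← eq_sub_iff_add_eq, hk]
  · simp [hg]

lemma Finsupp.supported_ne_bot {ι K : Type*} [Semiring K] [Nontrivial K] {s : Set ι}
    (hs : s.Nonempty) : supported K K s ≠ ⊥ := by
  obtain ⟨a, ha⟩ := hs
  exact (Submodule.ne_bot_iff _).2 ⟨single a 1, single_mem_supported K 1 ha, by simp⟩

lemma Finsupp.supported_ne_top {ι K : Type*} [Semiring K] [Nontrivial K] {s : Set ι}
    (hs : sᶜ.Nonempty) : supported K K s ≠ ⊤ := by
  obtain ⟨a, ha⟩ := hs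
  intro htop
  have : single a (1 : K) ∈ supported K K s := htop ▸ Submodule.mem_top
  rw [supported_eq_span_single, single_mem_span_single] at this
  exact ha this

lemma Submodule.eq_top_of_forall_single_one_mem {ι K : Type*} [Semiring K]
    {W : Submodule K (ι →₀ K)} (h : ∀ k, single k 1 ∈ W) : W = ⊤ := by
  rw [eq_top_iff, ← Finsupp.basisSingleOne.span_eq, span_le, coe_basisSingleOne]
  rintro _ ⟨k, rfl⟩
  exact h k

theorem Submodule.single_one_mem_of_diagonal {ι K : Type*} [Field K] {W : Submodule K (ι →₀ K)}
    (μ : ι → K) (hμ : Function.Injective μ) (hW : ∀ v ∈ W, ∃ w ∈ W, ∀ m, w m = μ m * v m)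
    {v : ι →₀ K} (hv : v ∈ W) {k : ι} (hk : v k ≠ 0) : single k 1 ∈ W := by
  classical
  induction hn : v.support.card using Nat.strong_induction_on generalizing v with
  | _ n ih =>
  by_cases hs : v.support = {k}
  · rw [← inv_mul_cancel₀ hk, ← smul_eq_mul, ← smul_single, ← support_eq_singleton.1 hs |>.2]
    exact W.smul_mem _ hv
  obtain ⟨k', hk', hk'k⟩ : ∃ k' ∈ v.support, k' ≠ k := by
    by_contra! h
    exact hs (Finset.eq_singleton_iff_unique_mem.2 ⟨mem_support_iff.2 hk, h⟩)
  obtain ⟨w, hwW, hw⟩ := hW v hv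
  set u := w - μ k' • v
  have hu : ∀ m, u m = (μ m - μ k') * v m := fun m => by simp [u, hw, sub_mul]
  have huk : u k ≠ 0 := by
    rw [hu]
    exact mul_ne_zero (sub_ne_zero.2 (hμ.ne hk'k.symm)) hk
  have hsupp : u.support ⊆ v.support.erase k' := fun m hm => by
    rw [mem_support_iff, hu] at hm
    refine Finset.mem_erase.2 ⟨?_, mem_support_iff.2 (right_ne_zero_of_mul hm)⟩
    rintro rfl
    simp at hm
  refine ih _ ?_ (W.sub_mem hwW (W.smul_mem _ hv)) huk rfl
  calc u.support.card ≤ (v.support.erase k').card := Finset.card_le_card hsupp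
    _ < n := hn ▸ Finset.card_erase_lt_of_mem hk'

section Action

variable (α β F : ℂ)

lemma ρ_e (x : HVBasis) (v : ℤ →₀ ℂ) : ρ α β F (e x) v = actB α β F x v := by
  simp [ρ, e]

lemma actB_d_apply (i m : ℤ) (v : ℤ →₀ ℂ) :
    actB α β F (.d i) v m = (α + (m - i) + β * i) * v (m - i) := by
  rw [actB, sum_smul_single_add_apply _ _ _ _ (zero_mul _)]
  push_cast
  ring

lemma actB_i_apply (i m : ℤ) (v : ℤ →₀ ℂ) : actB α β F (.i i) v m = F * v (m - i) := by
  rw [actB, sum_smul_single_add_apply _ _ _ _ (zero_mul _), mul_comm]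

lemma actB_d_single (i k : ℤ) :
    actB α β F (.d i) (single k 1) = (α + k + β * i) • single (k + i) 1 := by
  rw [actB, sum_single_index (by rw [zero_mul, zero_smul]), one_mul]

lemma actB_i_single (i k : ℤ) : actB α β F (.i i) (single k 1) = F • single (k + i) 1 := by
  rw [actB, sum_single_index (by rw [zero_mul, zero_smul]), one_mul]

variable {α β F} in
lemma ρ_mem_of_actB_mem {W : Submodule ℂ (ℤ →₀ ℂ)} (h : ∀ j, ∀ v ∈ W, actB α β F j v ∈ W)
    (x : HV) {v : ℤ →₀ ℂ} (hv : v ∈ W) : ρ α β F x v ∈ W :=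
  W.sum_mem fun j _ => W.smul_mem _ (h j v hv)

end Action

section Invariant

variable {α β F : ℂ} {W : Submodule ℂ (ℤ →₀ ℂ)} (hW : ∀ x : HV, ∀ v ∈ W, ρ α β F x v ∈ W)
include hW

lemma single_one_mem_of_invariant {v : ℤ →₀ ℂ} (hv : v ∈ W) {k : ℤ} (hk : v k ≠ 0) :
    single k 1 ∈ W := by
  refine W.single_one_mem_of_diagonal (fun m : ℤ => (m : ℂ)) Int.cast_injective
    (fun v hv => ⟨ρ α β F (e (.d 0)) v - α • v, W.sub_mem (hW _ v hv) (W.smul_mem α hv),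
      fun m => ?_⟩) hv hk
  simp only [Finsupp.sub_apply, Finsupp.smul_apply, ρ_e, actB_d_apply, smul_eq_mul,
    Int.cast_zero, sub_zero, mul_zero, add_zero]
  ring

lemma relation_of_single_one_mem_of_notMem {k m : ℤ} (hk : single k 1 ∈ W)
    (hm : single m 1 ∉ W) : F = 0 ∧ α + k + β * (m - k) = 0 := by
  have hzero : ∀ (j : HVBasis) (c : ℂ), actB α β F j (single k 1) = c • single m 1 → c = 0 := by
    intro j c hj
    by_contra hc
    have := W.smul_mem c⁻¹ (hW (e j) _ hk)
    rw [ρ_e, hj, inv_smul_smul₀ hc] at this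
    exact hm this
  refine ⟨hzero (.i (m - k)) F ?_, hzero (.d (m - k)) _ ?_⟩
  · rw [actB_i_single, add_sub_cancel]
  · rw [actB_d_single, add_sub_cancel, Int.cast_sub]

theorem params_of_invariant (hbot : W ≠ ⊥) (htop : W ≠ ⊤) :
    F = 0 ∧ (∃ n : ℤ, α = n) ∧ (β = 0 ∨ β = 1) := by
  obtain ⟨v, hv, hv0⟩ := (Submodule.ne_bot_iff W).1 hbot
  obtain ⟨k, hk⟩ := Finsupp.ne_iff.1 hv0
  have hkW := single_one_mem_of_invariant hW hv hk
  obtain ⟨m, hm⟩ : ∃ m, single m 1 ∉ W := by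
    by_contra! h
    exact htop (W.eq_top_of_forall_single_one_mem h)
  obtain ⟨hF, hkm⟩ := relation_of_single_one_mem_of_notMem hW hkW hm
  refine ⟨hF, ?_⟩
  by_cases h : ∃ k' ≠ k, single k' 1 ∈ W
  · obtain ⟨k', hk'k, hk'W⟩ := h
    have hk'm := (relation_of_single_one_mem_of_notMem hW hk'W hm).2
    have hkk' : (k' : ℂ) - k ≠ 0 := sub_ne_zero.2 (Int.cast_injective.ne hk'k)
    have hβ : β = 1 := by
      have : (1 - β) * ((k' : ℂ) - k) = 0 := by linear_combination hk'm - hkm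
      linear_combination -(mul_eq_zero.1 this).resolve_right hkk'
    exact ⟨⟨-m, by push_cast; linear_combination hkm - ((m : ℂ) - k) * hβ⟩, .inr hβ⟩
  · push Not at h
    have h1 := (relation_of_single_one_mem_of_notMem hW hkW (h (k + 1) (by omega))).2
    have h2 := (relation_of_single_one_mem_of_notMem hW hkW (h (k + 2) (by omega))).2
    push_cast at h1 h2
    have hβ : β = 0 := by linear_combination h2 - h1
    exact ⟨⟨-k, by push_cast; linear_combination h1 - hβ⟩, .inl hβ⟩

end Invariant

lemma actB_eq_zero_of_mem_supported (n : ℤ) (j : HVBasis) {v : ℤ →₀ ℂ}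
    (hv : v ∈ supported ℂ ℂ {-n}) : actB n 0 0 j v = 0 := by
  rw [mem_supported'] at hv
  ext m
  cases j with
  | d i =>
    rw [actB_d_apply, Finsupp.zero_apply]
    by_cases h : m - i = -n
    · rw [show (m : ℂ) - i = -n by exact_mod_cast h]
      ring
    · rw [hv _ h, mul_zero]
  | i i => rw [actB_i_apply, zero_mul, Finsupp.zero_apply]
  | c | cd | ci => rfl

lemma actB_apply_neg_eq_zero (n : ℤ) (j : HVBasis) (v : ℤ →₀ ℂ) :
    actB n 1 0 j v (-n) = 0 := by
  cases j with
  | d i => rw [actB_d_apply]; push_cast; ring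
  | i i => rw [actB_i_apply, zero_mul]
  | c | cd | ci => rfl

/-- The intermediate series module `V(α,β,F)` is reducible (has a nonzero proper
invariant subspace) if and only if `F = 0`, `α ∈ ℤ`, and `β ∈ {0,1}`. -/
theorem stmt4 (α β F : ℂ) :
    (∃ W : Submodule ℂ (ℤ →₀ ℂ), W ≠ ⊥ ∧ W ≠ ⊤ ∧
        ∀ (x : HV), ∀ v ∈ W, ρ α β F x v ∈ W)
      ↔ (F = 0 ∧ (∃ n : ℤ, α = (n : ℂ)) ∧ (β = 0 ∨ β = 1)) := by
  refine ⟨fun ⟨W, hbot, htop, hW⟩ => params_of_invariant hW hbot htop, ?_⟩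
  rintro ⟨rfl, ⟨n, rfl⟩, rfl | rfl⟩
  · refine ⟨supported ℂ ℂ {-n}, supported_ne_bot (Set.singleton_nonempty _),
      supported_ne_top ⟨1 - n, by simp⟩, ρ_mem_of_actB_mem fun j v hv => ?_⟩
    rw [actB_eq_zero_of_mem_supported n j hv]
    exact Submodule.zero_mem _
  · refine ⟨supported ℂ ℂ {-n}ᶜ, supported_ne_bot ⟨1 - n, by simp⟩,
      supported_ne_top (by simp), ρ_mem_of_actB_mem fun j v _ => ?_⟩
    rw [mem_supported']
    intro m hm
    rw [Set.notMem_compl_iff, Set.mem_singleton_iff] at hm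
    rw [hm, actB_apply_neg_eq_zero]
end

section
/- Let V be a module over HV⊗B, and suppose J is an ideal of B and W a subspace of V such that (Vir⊗J)·W = 0. If R₁ and R₋₁ are ideals of B with (I_1⊗R₁)·W = 0 and (I_{-1}⊗R_{-1})·W = 0, then (I_{j+1}⊗(J·R₁))·W = 0 for all j ≥ 0 and (I_{j-1}⊗(J·R_{-1}))·W = 0 for all j ≤ 0; consequently (I_j⊗J²R₁R_{-1})·W = 0 for all j ≠ 0. -/
/-! If `d_j ⊗ a` and `I_{±1} ⊗ r` both kill `w`, so does their commutator, which is
`±I_{j±1} ⊗ ar` as long as the central term `δ_{j,∓1}` does not occur; that covers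
`j ≥ 0` resp. `j ≤ 0`. An element of `J²R₁R₋₁` is a sum of products lying both in
`J R₁` and in `J R₋₁`, which gives the positive and the negative degrees. -/

theorem Module.End.apply_eq_zero_of_commutator_eq_smul {K V : Type*} [Field K]
    [AddCommGroup V] [Module K V] {d I I' : Module.End K V} {m : K} (hm : m ≠ 0)
    (hcomm : d * I - I * d = m • I') {w : V} (hd : d w = 0) (hI : I w = 0) : I' w = 0 := by
  have h := LinearMap.congr_fun hcomm w
  simp only [LinearMap.sub_apply, Module.End.mul_apply, hd, hI, map_zero, sub_zero,
    LinearMap.smul_apply] at h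
  exact (smul_eq_zero.mp h.symm).resolve_left hm

theorem actI_add_apply_eq_zero {B K V : Type*} [Mul B] [Field K] [CharZero K]
    [AddCommGroup V] [Module K V] {actd actI : ℤ → B → Module.End K V}
    {actCD : B → Module.End K V}
    (hbr : ∀ (n m : ℤ) (a c : B),
      actd n a * actI m c - actI m c * actd n a
        = (m : K) • actI (m + n) (a * c)
          + (if n = -m then ((n ^ 2 + n : ℤ) : K) • actCD (a * c) else 0))
    {n m : ℤ} (hnm : n ≠ -m) (hm : m ≠ 0) {a c : B} {w : V}
    (hd : actd n a w = 0) (hI : actI m c w = 0) : actI (m + n) (a * c) w = 0 := by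
  refine Module.End.apply_eq_zero_of_commutator_eq_smul (Int.cast_ne_zero.mpr hm) ?_ hd hI
  rw [hbr, if_neg hnm, add_zero]

theorem Ideal.eq_zero_of_mem_mul {B M : Type*} [CommSemiring B] [AddMonoid M]
    (f : B →+ M) {I I' : Ideal B} (h : ∀ a ∈ I, ∀ b ∈ I', f (a * b) = 0) {x : B}
    (hx : x ∈ I * I') : f x = 0 :=
  Submodule.mul_induction_on hx h fun y z hy hz => by rw [map_add, hy, hz, add_zero]

theorem stmt6_general {B V : Type*} [CommRing B] [Algebra ℂ B]
    [AddCommGroup V] [Module ℂ V]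
    (actd actI : ℤ → B → Module.End ℂ V) (actCD : B → Module.End ℂ V)
    (hIlin : ∀ n : ℤ, IsLinearMap ℂ (actI n))
    (hbr : ∀ (n m : ℤ) (a c : B),
      actd n a * actI m c - actI m c * actd n a
        = (m : ℂ) • actI (m + n) (a * c)
          + (if n = -m then ((n ^ 2 + n : ℤ) : ℂ) • actCD (a * c) else 0))
    (J R1 Rm1 : Ideal B) (W : Submodule ℂ V)
    (hVJ : ∀ a ∈ J, ∀ n : ℤ, ∀ w ∈ W, actd n a w = 0)
    (hR1 : ∀ r ∈ R1, ∀ w ∈ W, actI 1 r w = 0)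
    (hRm1 : ∀ r ∈ Rm1, ∀ w ∈ W, actI (-1) r w = 0) :
    (∀ j : ℤ, 0 ≤ j → ∀ a ∈ J, ∀ r ∈ R1, ∀ w ∈ W, actI (j + 1) (a * r) w = 0) ∧
    (∀ j : ℤ, j ≤ 0 → ∀ a ∈ J, ∀ r ∈ Rm1, ∀ w ∈ W, actI (j - 1) (a * r) w = 0) ∧
    (∀ j : ℤ, j ≠ 0 → ∀ x ∈ J * J * R1 * Rm1, ∀ w ∈ W, actI j x w = 0) := by
  have hpos : ∀ j : ℤ, 0 ≤ j → ∀ a ∈ J, ∀ r ∈ R1, ∀ w ∈ W, actI (j + 1) (a * r) w = 0 :=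
    fun j hj a ha r hr w hw => by
      rw [add_comm]
      exact actI_add_apply_eq_zero hbr (by omega) one_ne_zero (hVJ a ha j w hw) (hR1 r hr w hw)
  have hneg : ∀ j : ℤ, j ≤ 0 → ∀ a ∈ J, ∀ r ∈ Rm1, ∀ w ∈ W, actI (j - 1) (a * r) w = 0 :=
    fun j hj a ha r hr w hw => by
      rw [sub_eq_neg_add]
      exact actI_add_apply_eq_zero hbr (by omega) (by norm_num) (hVJ a ha j w hw)
        (hRm1 r hr w hw)
  refine ⟨hpos, hneg, fun j hj x hx w hw => ?_⟩
  let applyTo : B →+ V := AddMonoidHom.mk' (fun x => actI j x w) fun x y => by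
    rw [(hIlin j).map_add, LinearMap.add_apply]
  rcases hj.lt_or_gt with hj | hj
  · have hle : J * J * R1 * Rm1 ≤ J * Rm1 :=
      Ideal.mul_mono_left (Ideal.mul_le_left.trans Ideal.mul_le_left)
    exact Ideal.eq_zero_of_mem_mul applyTo
      (fun a ha r hr => by simpa [applyTo] using hneg (j + 1) (by omega) a ha r hr w hw) (hle hx)
  · have hle : J * J * R1 * Rm1 ≤ J * R1 :=
      Ideal.mul_le_left.trans (Ideal.mul_mono_left Ideal.mul_le_left)
    exact Ideal.eq_zero_of_mem_mul applyTo
      (fun a ha r hr => by simpa [applyTo] using hpos (j - 1) (by omega) a ha r hr w hw) (hle hx)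

/-- Let `V` be a module over `HV ⊗ B` with `actd n a`, `actI n a`, `actC a`,
`actCD a` the actions of `d_n ⊗ a`, `I_n ⊗ a`, `C ⊗ a`, `C_D ⊗ a`, satisfying the
bracket `[d_n ⊗ a, I_m ⊗ c] = m · I_{m+n} ⊗ ac + δ_{n,-m}(n²+n) C_D ⊗ ac`.
Suppose `(Vir ⊗ J) · W = 0`, `(I_1 ⊗ R₁) · W = 0` and `(I_{-1} ⊗ R_{-1}) · W = 0`.
Then `(I_{j+1} ⊗ J·R₁) · W = 0` for all `j ≥ 0`, `(I_{j-1} ⊗ J·R_{-1}) · W = 0`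
for all `j ≤ 0`, and consequently `(I_j ⊗ J²R₁R_{-1}) · W = 0` for all `j ≠ 0`. -/
theorem stmt6 {B V : Type*} [CommRing B] [Algebra ℂ B]
    [AddCommGroup V] [Module ℂ V]
    (actd actI : ℤ → B → Module.End ℂ V) (actC actCD : B → Module.End ℂ V)
    (hIlin : ∀ n : ℤ, IsLinearMap ℂ (actI n))
    (hbr : ∀ (n m : ℤ) (a c : B),
      actd n a * actI m c - actI m c * actd n a
        = (m : ℂ) • actI (m + n) (a * c)
          + (if n = -m then ((n ^ 2 + n : ℤ) : ℂ) • actCD (a * c) else 0))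
    (J R1 Rm1 : Ideal B) (W : Submodule ℂ V)
    (hVJ : ∀ a ∈ J, ∀ n : ℤ, ∀ w ∈ W, actd n a w = 0)
    (hCJ : ∀ a ∈ J, ∀ w ∈ W, actC a w = 0)
    (hR1 : ∀ r ∈ R1, ∀ w ∈ W, actI 1 r w = 0)
    (hRm1 : ∀ r ∈ Rm1, ∀ w ∈ W, actI (-1) r w = 0) :
    (∀ j : ℤ, 0 ≤ j → ∀ a ∈ J, ∀ r ∈ R1, ∀ w ∈ W, actI (j + 1) (a * r) w = 0) ∧
    (∀ j : ℤ, j ≤ 0 → ∀ a ∈ J, ∀ r ∈ Rm1, ∀ w ∈ W, actI (j - 1) (a * r) w = 0) ∧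
    (∀ j : ℤ, j ≠ 0 → ∀ x ∈ J * J * R1 * Rm1, ∀ w ∈ W, actI j x w = 0) :=
  stmt6_general actd actI actCD hIlin hbr J R1 Rm1 W hVJ hR1 hRm1
end

section
/- Let V be a module over HV⊗B on which HV⊗J is abelian (e.g., J² = 0) and on which I_0⊗f and C_D⊗f act as scalars λ_{I₀} and λ_{C_D} respectively, for a fixed f ∈ J. Suppose for each j ≠ 0 the operator d_j⊗f is nilpotent on V with minimal nilpotency degree m_j ≥ 1, and I_{-j} acts on V with [I_{-j}, d_j⊗f] = j·I_0⊗f - (j²+j)·C_D⊗f (acting on V). Then for every j ≠ 0 there is a nonzero v ∈ V with (j·λ_{I₀} - (j²+j)·λ_{C_D})·v = 0; consequently, if this holds for at least two distinct nonzero values of j, then λ_{I₀} = λ_{C_D} = 0. -/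
/-- If `[A,B] = c • 1`, then `A * B^(n+1) - B^(n+1) * A = ((n+1)*c) • B^n`. -/
lemma comm_pow_aux {V : Type*} [AddCommGroup V] [Module ℂ V]
    (A B : Module.End ℂ V) (c : ℂ)
    (h : A * B - B * A = c • (1 : Module.End ℂ V)) :
    ∀ n : ℕ, A * B ^ (n + 1) - B ^ (n + 1) * A = (((n : ℂ) + 1) * c) • B ^ n := by
  have hAB : A * B = B * A + c • (1 : Module.End ℂ V) := eq_add_of_sub_eq' h
  intro n
  induction n with
  | zero => simpa using h
  | succ n ih =>
    have hABn : A * B ^ (n + 1) = B ^ (n + 1) * A + (((n : ℂ) + 1) * c) • B ^ n :=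
      eq_add_of_sub_eq' ih
    have step : A * B ^ (n + 2)
        = B ^ (n + 2) * A + (((n : ℂ) + 1 + 1) * c) • B ^ (n + 1) := by
      calc A * B ^ (n + 2) = (A * B ^ (n + 1)) * B := by
            rw [pow_succ, mul_assoc]
        _ = (B ^ (n + 1) * A + (((n : ℂ) + 1) * c) • B ^ n) * B := by rw [hABn]
        _ = B ^ (n + 1) * (A * B) + (((n : ℂ) + 1) * c) • B ^ (n + 1) := by
            rw [add_mul, mul_assoc, smul_mul_assoc, ← pow_succ]
        _ = B ^ (n + 1) * (B * A + c • 1) + (((n : ℂ) + 1) * c) • B ^ (n + 1) := by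
            rw [hAB]
        _ = B ^ (n + 2) * A + (c • B ^ (n + 1) + (((n : ℂ) + 1) * c) • B ^ (n + 1)) := by
            rw [mul_add, ← mul_assoc, ← pow_succ, mul_smul_comm, mul_one, add_assoc]
        _ = B ^ (n + 2) * A + (((n : ℂ) + 1 + 1) * c) • B ^ (n + 1) := by
            rw [← add_smul]; ring_nf
    rw [step]
    push_cast
    abel

/-- Let `V` be an `HV ⊗ B`-module, `f ∈ J` with `J² = 0` (so `HV ⊗ J` is abelian:
the operators `df i` of `d_i ⊗ f` commute), on which `I_0 ⊗ f` and `C_D ⊗ f` act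
as scalars `lI0` and `lCD`, and `[I_{-j}, d_j ⊗ f] = j·I_0⊗f - (j²+j)·C_D⊗f`.
If each `df j` (`j ≠ 0`) is nilpotent with minimal nilpotency degree `m j ≥ 1`,
then for every `j ≠ 0` there is a nonzero `v` with
`(j·lI0 - (j²+j)·lCD) • v = 0`; consequently `lI0 = lCD = 0`. -/
theorem stmt10 {V : Type*} [AddCommGroup V] [Module ℂ V]
    (df Iop : ℤ → Module.End ℂ V) (lI0 lCD : ℂ)
    (habel : ∀ i j : ℤ, Commute (df i) (df j))
    (hbr : ∀ j : ℤ, j ≠ 0 →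
      Iop (-j) * df j - df j * Iop (-j)
        = ((j : ℂ) * lI0 - ((j ^ 2 + j : ℤ) : ℂ) * lCD) • (1 : Module.End ℂ V))
    (m : ℤ → ℕ)
    (hm1 : ∀ j : ℤ, j ≠ 0 → 1 ≤ m j)
    (hmz : ∀ j : ℤ, j ≠ 0 → (df j) ^ (m j) = 0)
    (hmin : ∀ j : ℤ, j ≠ 0 → (df j) ^ (m j - 1) ≠ 0) :
    (∀ j : ℤ, j ≠ 0 → ∃ v : V, v ≠ 0 ∧
      ((j : ℂ) * lI0 - ((j ^ 2 + j : ℤ) : ℂ) * lCD) • v = 0) ∧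
    lI0 = 0 ∧ lCD = 0 := by
  have key : ∀ j : ℤ, j ≠ 0 →
      (j : ℂ) * lI0 - ((j ^ 2 + j : ℤ) : ℂ) * lCD = 0 := by
    intro j hj
    set c : ℂ := (j : ℂ) * lI0 - ((j ^ 2 + j : ℤ) : ℂ) * lCD with hc
    obtain ⟨n, hn⟩ : ∃ n : ℕ, m j = n + 1 :=
      ⟨m j - 1, (Nat.succ_pred_eq_of_pos (hm1 j hj)).symm⟩
    have h := comm_pow_aux (Iop (-j)) (df j) c (hbr j hj) n
    rw [← hn, hmz j hj, mul_zero, zero_mul, zero_sub, neg_zero] at h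
    replace h := h.symm
    have hne : (df j) ^ n ≠ 0 := by
      have := hmin j hj
      rwa [hn, Nat.add_sub_cancel] at this
    have := (smul_eq_zero.mp h).resolve_right hne
    have hn1 : ((n : ℂ) + 1) ≠ 0 := by
      exact_mod_cast Nat.cast_add_one_ne_zero (R := ℂ) n
    exact (mul_eq_zero.mp this).resolve_left hn1
  constructor
  · intro j hj
    obtain ⟨v, hv⟩ : ∃ v : V, ((df j) ^ (m j - 1)) v ≠ 0 := by
      by_contra h
      push_neg at h
      exact hmin j hj (LinearMap.ext fun v => h v)
    exact ⟨((df j) ^ (m j - 1)) v, hv, by rw [key j hj, zero_smul]⟩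
  · have h1 := key 1 one_ne_zero
    have h2 := key 2 two_ne_zero
    push_cast at h1 h2
    constructor
    · linear_combination 3 * h1 - h2
    · linear_combination h1 - h2 / 2
end

section
/- The positive part HV⁺ of the Heisenberg–Virasoro algebra, spanned by {d_i, I_i : i > 0}, is generated as a Lie algebra by d_1, d_2, and I_1. -/
lemma br_zero_left (y : HV) : br 0 y = 0 := Finsupp.sum_zero_index

lemma br_zero_right (x : HV) : br x 0 = 0 := by
  simp [br, Finsupp.sum_zero_index]

lemma br_add_left (x x' y : HV) : br (x + x') y = br x y + br x' y := by
  refine Finsupp.sum_add_index' (fun i => ?_) (fun i b₁ b₂ => ?_)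
  · simp
  · rw [← Finsupp.sum_add]
    exact Finsupp.sum_congr fun j _ => by rw [add_mul, add_smul]

lemma br_smul_left (a : ℂ) (x y : HV) : br (a • x) y = a • br x y := by
  unfold br
  rw [Finsupp.sum_smul_index (fun i => by simp), Finsupp.smul_sum]
  refine Finsupp.sum_congr fun i _ => ?_
  rw [Finsupp.smul_sum]
  refine Finsupp.sum_congr fun j _ => ?_
  rw [smul_smul, mul_assoc]

lemma br_add_right (x y y' : HV) : br x (y + y') = br x y + br x y' := by
  unfold br
  rw [← Finsupp.sum_add]
  refine Finsupp.sum_congr fun i _ => ?_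
  exact Finsupp.sum_add_index' (fun j => by simp) (fun j b₁ b₂ => by rw [mul_add, add_smul])

lemma br_smul_right (a : ℂ) (x y : HV) : br x (a • y) = a • br x y := by
  unfold br
  rw [Finsupp.smul_sum]
  refine Finsupp.sum_congr fun i _ => ?_
  rw [Finsupp.sum_smul_index (fun j => by simp), Finsupp.smul_sum]
  refine Finsupp.sum_congr fun j _ => ?_
  rw [mul_left_comm, mul_smul]

lemma br_e_e (x y : HVBasis) : br (e x) (e y) = bb x y := by
  unfold br e
  rw [Finsupp.sum_single_index (by simp), Finsupp.sum_single_index (by simp)]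
  simp
lemma bb_d_d (n m : ℤ) (hn : 0 < n) (hm : 0 < m) :
    bb (.d n) (.d m) = ((m : ℂ) - n) • e (.d (n + m)) := by
  simp only [bb, if_neg (by omega : n ≠ -m), zero_smul, add_zero]

lemma bb_d_i (n m : ℤ) (hn : 0 < n) (hm : 0 < m) :
    bb (.d n) (.i m) = (m : ℂ) • e (.i (m + n)) := by
  simp only [bb, if_neg (by omega : n ≠ -m), zero_smul, add_zero]

lemma bb_i_d (n m : ℤ) (hn : 0 < n) (hm : 0 < m) :
    bb (.i n) (.d m) = -((n : ℂ) • e (.i (n + m))) := by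
  simp only [bb, if_neg (by omega : m ≠ -n), zero_smul, add_zero]

lemma bb_i_i (n m : ℤ) (hn : 0 < n) (hm : 0 < m) :
    bb (.i n) (.i m) = 0 := by
  simp only [bb, if_neg (by omega : n ≠ -m), zero_smul]

/-- The positive part `HV⁺ = span{d_i, I_i : i > 0}` of the Heisenberg–Virasoro
algebra is generated as a Lie algebra by `d_1, d_2, I_1`: it equals the smallest
subspace containing `d_1, d_2, I_1` that is closed under the bracket. -/
theorem stmt12 :
    Submodule.span ℂ
        ({z : HV | ∃ i : ℤ, 0 < i ∧ z = e (.d i)} ∪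
         {z : HV | ∃ i : ℤ, 0 < i ∧ z = e (.i i)})
      = sInf {W : Submodule ℂ HV |
          e (.d 1) ∈ W ∧ e (.d 2) ∈ W ∧ e (.i 1) ∈ W ∧
          ∀ x ∈ W, ∀ y ∈ W, br x y ∈ W} := by
  set G : Set HV := ({z : HV | ∃ i : ℤ, 0 < i ∧ z = e (.d i)} ∪
         {z : HV | ∃ i : ℤ, 0 < i ∧ z = e (.i i)}) with hG
  apply le_antisymm
  · refine le_sInf fun W hW => ?_
    obtain ⟨hd1, hd2, hi1, hbr⟩ := hW
    have hd : ∀ n : ℤ, 1 ≤ n → e (.d n) ∈ W := by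
      refine Int.le_induction hd1 ?_
      intro n hn ih
      · rcases eq_or_lt_of_le hn with h1 | h2
        · rw [← h1]; norm_num; exact hd2
        · have hb := hbr _ hd1 _ ih
          rw [br_e_e, bb_d_d 1 n one_pos (by omega)] at hb
          push_cast at hb
          have hc : ((n : ℂ) - 1) ≠ 0 := by
            have : (n : ℂ) ≠ 1 := by exact_mod_cast (by omega : n ≠ 1)
            exact sub_ne_zero.mpr this
          have h2' := W.smul_mem ((n : ℂ) - 1)⁻¹ hb
          rw [smul_smul, inv_mul_cancel₀ hc, one_smul] at h2'
          rwa [show (1 : ℤ) + n = n + 1 by ring] at h2'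
    have hi : ∀ n : ℤ, 1 ≤ n → e (.i n) ∈ W := by
      refine Int.le_induction hi1 ?_
      intro n hn ih
      · have hb := hbr _ (hd n (by omega)) _ hi1
        rw [br_e_e, bb_d_i n 1 (by omega) one_pos] at hb
        rw [Int.cast_one, one_smul] at hb
        rwa [show (1 : ℤ) + n = n + 1 by ring] at hb
    refine Submodule.span_le.mpr ?_
    rintro z (⟨i, hi0, rfl⟩ | ⟨i, hi0, rfl⟩)
    · exact hd i hi0
    · exact hi i hi0
  · refine sInf_le ⟨Submodule.subset_span (Or.inl ⟨1, one_pos, rfl⟩),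
      Submodule.subset_span (Or.inl ⟨2, by norm_num, rfl⟩),
      Submodule.subset_span (Or.inr ⟨1, one_pos, rfl⟩),
      fun x hx y hy => ?_⟩
    induction hx using Submodule.span_induction with
    | mem g hg =>
      induction hy using Submodule.span_induction with
      | mem h hh =>
        rcases hg with ⟨n, hn, rfl⟩ | ⟨n, hn, rfl⟩ <;>
          rcases hh with ⟨m, hm, rfl⟩ | ⟨m, hm, rfl⟩
        · rw [br_e_e, bb_d_d n m hn hm]
          exact Submodule.smul_mem _ _
            (Submodule.subset_span (Or.inl ⟨n + m, by omega, rfl⟩))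
        · rw [br_e_e, bb_d_i n m hn hm]
          exact Submodule.smul_mem _ _
            (Submodule.subset_span (Or.inr ⟨m + n, by omega, rfl⟩))
        · rw [br_e_e, bb_i_d n m hn hm]
          exact Submodule.neg_mem _ (Submodule.smul_mem _ _
            (Submodule.subset_span (Or.inr ⟨n + m, by omega, rfl⟩)))
        · rw [br_e_e, bb_i_i n m hn hm]
          exact Submodule.zero_mem _
      | zero => rw [br_zero_right]; exact Submodule.zero_mem _
      | add y₁ y₂ hy₁ hy₂ ih₁ ih₂ =>
        rw [br_add_right]; exact Submodule.add_mem _ ih₁ ih₂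
      | smul a y₁ hy₁ ih =>
        rw [br_smul_right]; exact Submodule.smul_mem _ _ ih
    | zero => rw [br_zero_left]; exact Submodule.zero_mem _
    | add x₁ x₂ hx₁ hx₂ ih₁ ih₂ =>
      rw [br_add_left]; exact Submodule.add_mem _ ih₁ ih₂
    | smul a x₁ hx₁ ih =>
      rw [br_smul_left]; exact Submodule.smul_mem _ _ ih
end

section
/- Let V(φ) be the irreducible highest weight module over HV⊗B with highest weight vector v_φ. If J is an ideal of B such that (d_{-2}⊗J)·v_φ = 0 and (I_{-2}⊗J)·v_φ = 0, then φ(d_0⊗f) = φ(I_0⊗f) = φ(C⊗f) = φ(C_D⊗f) = φ(C_I⊗f) = 0 for all f ∈ J. -/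
/-- Let `V(φ)` be an irreducible highest weight module over the map
Heisenberg–Virasoro algebra `HV ⊗ B`, with highest weight vector `vφ` on which the
degree-zero part acts through the character `(φd, φI, φC, φCD, φCI)`. Here
`D n b, Iop n b, Cop b, CD b, CI b` denote the actions of
`d_n ⊗ b, I_n ⊗ b, C ⊗ b, C_D ⊗ b, C_I ⊗ b`, satisfying the HV ⊗ B brackets.
If `J` is an ideal of `B` with `(d_{-2} ⊗ J)·vφ = 0` and `(I_{-2} ⊗ J)·vφ = 0`,
then `φ` vanishes on `(HV)₀ ⊗ J`. -/
theorem stmt13 {B V : Type*} [CommRing B] [Algebra ℂ B]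
    [AddCommGroup V] [Module ℂ V]
    (D Iop : ℤ → B → Module.End ℂ V) (Cop CD CI : B → Module.End ℂ V)
    (hdd : ∀ (n m : ℤ) (a b : B),
      D n a * D m b - D m b * D n a
        = ((m : ℂ) - (n : ℂ)) • D (n + m) (a * b)
          + (if n = -m then (((n ^ 3 - n : ℤ) : ℂ) / 12) • Cop (a * b) else 0))
    (hdi : ∀ (n m : ℤ) (a b : B),
      D n a * Iop m b - Iop m b * D n a
        = (m : ℂ) • Iop (m + n) (a * b)
          + (if n = -m then ((n ^ 2 + n : ℤ) : ℂ) • CD (a * b) else 0))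
    (hii : ∀ (n m : ℤ) (a b : B),
      Iop n a * Iop m b - Iop m b * Iop n a
        = if n = -m then (n : ℂ) • CI (a * b) else 0)
    (vφ : V) (hv : vφ ≠ 0)
    (φd φI φC φCD φCI : B → ℂ)
    (hhw : ∀ n : ℤ, 0 < n → ∀ b : B, D n b vφ = 0 ∧ Iop n b vφ = 0)
    (h0 : ∀ b : B, D 0 b vφ = φd b • vφ ∧ Iop 0 b vφ = φI b • vφ ∧
      Cop b vφ = φC b • vφ ∧ CD b vφ = φCD b • vφ ∧ CI b vφ = φCI b • vφ)
    (hirr : ∀ W : Submodule ℂ V,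
      (∀ (n : ℤ) (b : B), ∀ w ∈ W, D n b w ∈ W ∧ Iop n b w ∈ W ∧
        Cop b w ∈ W ∧ CD b w ∈ W ∧ CI b w ∈ W) → W = ⊥ ∨ W = ⊤)
    (J : Ideal B)
    (hJ : ∀ f ∈ J, D (-2) f vφ = 0 ∧ Iop (-2) f vφ = 0) :
    ∀ f ∈ J, φd f = 0 ∧ φI f = 0 ∧ φC f = 0 ∧ φCD f = 0 ∧ φCI f = 0 := by
  intro f hf
  obtain ⟨hd2, hi2⟩ := hJ f hf
  have hD1 : D 1 (1 : B) vφ = 0 := (hhw 1 one_pos 1).1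
  have hD2 : D 2 (1 : B) vφ = 0 := (hhw 2 two_pos 1).1
  have hI2 : Iop 2 (1 : B) vφ = 0 := (hhw 2 two_pos 1).2
  obtain ⟨e0d, e0I, e0C, e0CD, e0CI⟩ := h0 f
  have hsc : ∀ c : ℂ, c • vφ = 0 → c = 0 := fun c h =>
    (smul_eq_zero.mp h).resolve_right hv
  -- Step 1: D (-1) f vφ = 0
  have k1 := congrArg (fun T : Module.End ℂ V => T vφ) (hdd 1 (-2) 1 f)
  simp only [LinearMap.sub_apply, LinearMap.add_apply, LinearMap.smul_apply,
    Module.End.mul_apply, hd2, hD1, map_zero, one_mul] at k1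
  norm_num at k1
  -- Step 2: φd f = 0
  have k2 := congrArg (fun T : Module.End ℂ V => T vφ) (hdd 1 (-1) 1 f)
  simp only [LinearMap.sub_apply, LinearMap.add_apply, LinearMap.smul_apply,
    Module.End.mul_apply, k1, hD1, map_zero, one_mul] at k2
  norm_num [e0d, smul_smul] at k2
  have hφd : φd f = 0 := k2.resolve_right hv
  -- Step 3: φC f = 0
  have k3 := congrArg (fun T : Module.End ℂ V => T vφ) (hdd 2 (-2) 1 f)
  simp only [LinearMap.sub_apply, LinearMap.add_apply, LinearMap.smul_apply,
    Module.End.mul_apply, hd2, hD2, map_zero, one_mul] at k3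
  norm_num [e0d, e0C, hφd, smul_smul] at k3
  have hφC : φC f = 0 := by
    have := hsc _ k3.symm
    field_simp at this
    simpa using this
  -- Step 4
  have k4 := congrArg (fun T : Module.End ℂ V => T vφ) (hdi 2 (-2) 1 f)
  simp only [LinearMap.sub_apply, LinearMap.add_apply, LinearMap.smul_apply,
    Module.End.mul_apply, hi2, hD2, map_zero, one_mul] at k4
  norm_num [e0I, e0CD, smul_smul] at k4
  have r4 : (-2 * φI f + 6 * φCD f : ℂ) = 0 := by
    apply hsc
    linear_combination (norm := module) -k4
  -- Step 5
  have k5 := congrArg (fun T : Module.End ℂ V => T vφ) (hdi (-2) 2 f 1)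
  simp only [LinearMap.sub_apply, LinearMap.add_apply, LinearMap.smul_apply,
    Module.End.mul_apply, hd2, hI2, map_zero, mul_one] at k5
  norm_num [e0I, e0CD, smul_smul] at k5
  have r5 : (2 * φI f + 2 * φCD f : ℂ) = 0 := by
    apply hsc
    linear_combination (norm := module) -k5
  have hφI : φI f = 0 := by linear_combination (3 * r5 - r4) / 8
  have hφCD : φCD f = 0 := by linear_combination r4 / 8 + r5 / 8
  -- Step 6
  have k6 := congrArg (fun T : Module.End ℂ V => T vφ) (hii 2 (-2) 1 f)
  simp only [LinearMap.sub_apply, Module.End.mul_apply, hi2, hI2, map_zero,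
    one_mul] at k6
  norm_num [e0CI, smul_smul] at k6
  have hφCI : φCI f = 0 := by
    have := hsc _ k6.symm
    simpa using this
  exact ⟨hφd, hφI, hφC, hφCD, hφCI⟩
end

section
/- Let V(φ) be the irreducible highest weight module over HV⊗B with highest weight vector v_φ. Suppose J is an ideal of B with φ((HV)₀⊗J) = 0 and (HV⁺⊗J)·v_φ = 0. If (d_n⊗J)·v_φ = 0 and (I_n⊗J)·v_φ = 0 for all n > k (for some integer k), then (d_k⊗f)·v_φ is annihilated by d_1⊗b, d_2⊗b, and I_1⊗b for all b ∈ B; hence, since HV⁺ is generated by d_1, d_2, I_1, either (d_k⊗f)·v_φ = 0 or it is a highest weight vector. By induction, (HV⊗J)·v_φ = 0. -/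
/-- Let `V(φ)` be an irreducible highest weight module over `HV ⊗ B` with highest
weight vector `vφ`, and `J` an ideal of `B` with `φ((HV)₀ ⊗ J) = 0` and
`(HV⁺ ⊗ J)·vφ = 0`. If `(d_n ⊗ J)·vφ = 0 = (I_n ⊗ J)·vφ` for all `n > k`, then
`(d_k ⊗ f)·vφ` (for `f ∈ J`) is annihilated by `d_1 ⊗ b`, `d_2 ⊗ b` and `I_1 ⊗ b`
for all `b ∈ B` — hence, since `HV⁺` is generated by `d_1, d_2, I_1`, it is zero
or a highest weight vector (and highest weight vectors are multiples of `vφ`).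
By induction, `(HV ⊗ J)·vφ = 0`. -/
theorem stmt14 {B V : Type*} [CommRing B] [Algebra ℂ B]
    [AddCommGroup V] [Module ℂ V]
    (D Iop : ℤ → B → Module.End ℂ V) (Cop CD CI : B → Module.End ℂ V)
    (hdd : ∀ (n m : ℤ) (a b : B),
      D n a * D m b - D m b * D n a
        = ((m : ℂ) - (n : ℂ)) • D (n + m) (a * b)
          + (if n = -m then (((n ^ 3 - n : ℤ) : ℂ) / 12) • Cop (a * b) else 0))
    (hdi : ∀ (n m : ℤ) (a b : B),
      D n a * Iop m b - Iop m b * D n a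
        = (m : ℂ) • Iop (m + n) (a * b)
          + (if n = -m then ((n ^ 2 + n : ℤ) : ℂ) • CD (a * b) else 0))
    (hii : ∀ (n m : ℤ) (a b : B),
      Iop n a * Iop m b - Iop m b * Iop n a
        = if n = -m then (n : ℂ) • CI (a * b) else 0)
    (vφ : V) (hv : vφ ≠ 0)
    (φd φI φC φCD φCI : B → ℂ)
    (hhw : ∀ n : ℤ, 0 < n → ∀ b : B, D n b vφ = 0 ∧ Iop n b vφ = 0)
    (h0 : ∀ b : B, D 0 b vφ = φd b • vφ ∧ Iop 0 b vφ = φI b • vφ ∧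
      Cop b vφ = φC b • vφ ∧ CD b vφ = φCD b • vφ ∧ CI b vφ = φCI b • vφ)
    (hno : ∀ w : V, (∀ n : ℤ, 0 < n → ∀ b : B, D n b w = 0 ∧ Iop n b w = 0) →
      ∃ c : ℂ, w = c • vφ)
    (J : Ideal B)
    (hφJ : ∀ f ∈ J, φd f = 0 ∧ φI f = 0 ∧ φC f = 0 ∧ φCD f = 0 ∧ φCI f = 0)
    (hJhw : ∀ n : ℤ, 0 < n → ∀ f ∈ J, D n f vφ = 0 ∧ Iop n f vφ = 0) :
    (∀ k : ℤ, (∀ n : ℤ, k < n → ∀ f ∈ J, D n f vφ = 0 ∧ Iop n f vφ = 0) →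
      ∀ f ∈ J, ∀ b : B,
        D 1 b (D k f vφ) = 0 ∧ D 2 b (D k f vφ) = 0 ∧ Iop 1 b (D k f vφ) = 0) ∧
    (∀ n : ℤ, ∀ f ∈ J, D n f vφ = 0 ∧ Iop n f vφ = 0) := by

  have hCop : ∀ g ∈ J, Cop g vφ = 0 := fun g hg => by
    rw [(h0 g).2.2.1, (hφJ g hg).2.2.1, zero_smul]
  have hCD : ∀ g ∈ J, CD g vφ = 0 := fun g hg => by
    rw [(h0 g).2.2.2.1, (hφJ g hg).2.2.2.1, zero_smul]
  have hCI : ∀ g ∈ J, CI g vφ = 0 := fun g hg => by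
    rw [(h0 g).2.2.2.2, (hφJ g hg).2.2.2.2, zero_smul]
  have ann : ∀ k : ℤ,
      (∀ n : ℤ, k < n → ∀ f ∈ J, D n f vφ = 0 ∧ Iop n f vφ = 0) →
      ∀ f ∈ J, ∀ n : ℤ, 0 < n → ∀ b : B,
        D n b (D k f vφ) = 0 ∧ Iop n b (D k f vφ) = 0 ∧
        D n b (Iop k f vφ) = 0 ∧ Iop n b (Iop k f vφ) = 0 := by
    intro k hk f hf n hn b
    have hbf : b * f ∈ J := J.mul_mem_left b hf
    have hfb : f * b ∈ J := J.mul_mem_right b hf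
    have h1 : D n b vφ = 0 := (hhw n hn b).1
    have h2 : Iop n b vφ = 0 := (hhw n hn b).2
    refine ⟨?_, ?_, ?_, ?_⟩
    · have e := congrArg (fun T : Module.End ℂ V => T vφ) (hdd n k b f)
      simp only [LinearMap.sub_apply, Module.End.mul_apply, LinearMap.add_apply,
        LinearMap.smul_apply, LinearMap.zero_apply,
        apply_ite (fun T : Module.End ℂ V => T vφ)] at e
      rw [h1, map_zero, (hk (n + k) (by omega) _ hbf).1] at e
      simpa [hCop _ hbf] using e
    · have e := congrArg (fun T : Module.End ℂ V => T vφ) (hdi k n f b)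
      simp only [LinearMap.sub_apply, Module.End.mul_apply, LinearMap.add_apply,
        LinearMap.smul_apply, LinearMap.zero_apply,
        apply_ite (fun T : Module.End ℂ V => T vφ)] at e
      rw [h2, map_zero, (hk (n + k) (by omega) _ hfb).2] at e
      simpa [hCD _ hfb] using e
    · have e := congrArg (fun T : Module.End ℂ V => T vφ) (hdi n k b f)
      simp only [LinearMap.sub_apply, Module.End.mul_apply, LinearMap.add_apply,
        LinearMap.smul_apply, LinearMap.zero_apply,
        apply_ite (fun T : Module.End ℂ V => T vφ)] at e
      rw [h1, map_zero, (hk (k + n) (by omega) _ hbf).2] at e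
      simpa [hCD _ hbf] using e
    · have e := congrArg (fun T : Module.End ℂ V => T vφ) (hii n k b f)
      simp only [LinearMap.sub_apply, Module.End.mul_apply,
        LinearMap.smul_apply, LinearMap.zero_apply,
        apply_ite (fun T : Module.End ℂ V => T vφ)] at e
      rw [h2, map_zero] at e
      simpa [hCI _ hbf] using e
  have key : ∀ k : ℤ, k < 0 →
      (∀ n : ℤ, k < n → ∀ f ∈ J, D n f vφ = 0 ∧ Iop n f vφ = 0) →
      ∀ f ∈ J, D k f vφ = 0 ∧ Iop k f vφ = 0 := by
    intro k hk0 hk f hf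
    have A := ann k hk f hf
    have hkC : (k : ℂ) ≠ 0 := Int.cast_ne_zero.mpr (by omega)
    have lem : ∀ w : V, (∃ c : ℂ, w = c • vφ) →
        D 0 1 w = φd 1 • w + (k : ℂ) • w → w = 0 := by
      rintro w ⟨c, rfl⟩ h
      have h1 : D 0 1 (c • vφ) = φd 1 • (c • vφ) := by
        rw [map_smul, (h0 1).1, smul_comm]
      rw [h1] at h
      have h2 : (k : ℂ) • (c • vφ) = 0 := (left_eq_add.mp h)
      exact (smul_eq_zero.mp h2).resolve_left hkC
    constructor
    · refine lem _ (hno _ fun n hn b => ⟨(A n hn b).1, (A n hn b).2.1⟩) ?_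
      have e := congrArg (fun T : Module.End ℂ V => T vφ) (hdd 0 k 1 f)
      simp only [LinearMap.sub_apply, Module.End.mul_apply, LinearMap.add_apply,
        LinearMap.smul_apply, LinearMap.zero_apply,
        apply_ite (fun T : Module.End ℂ V => T vφ),
        zero_add, one_mul, if_neg (show ¬(0 : ℤ) = -k by omega), add_zero,
        Int.cast_zero, sub_zero] at e
      rw [(h0 1).1, map_smul, sub_eq_iff_eq_add] at e
      rw [e, add_comm]
    · refine lem _ (hno _ fun n hn b => ⟨(A n hn b).2.2.1, (A n hn b).2.2.2⟩) ?_
      have e := congrArg (fun T : Module.End ℂ V => T vφ) (hdi 0 k 1 f)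
      simp only [LinearMap.sub_apply, Module.End.mul_apply, LinearMap.add_apply,
        LinearMap.smul_apply, LinearMap.zero_apply,
        apply_ite (fun T : Module.End ℂ V => T vφ),
        add_zero, one_mul, if_neg (show ¬(0 : ℤ) = -k by omega)] at e
      rw [(h0 1).1, map_smul, sub_eq_iff_eq_add] at e
      rw [e, add_comm]
  have base : ∀ f ∈ J, D 0 f vφ = 0 ∧ Iop 0 f vφ = 0 := by
    intro f hf
    refine ⟨?_, ?_⟩
    · rw [(h0 f).1, (hφJ f hf).1, zero_smul]
    · rw [(h0 f).2.1, (hφJ f hf).2.1, zero_smul]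
  have allN : ∀ N : ℕ, ∀ n : ℤ, -(N : ℤ) ≤ n → ∀ f ∈ J,
      D n f vφ = 0 ∧ Iop n f vφ = 0 := by
    intro N
    induction N with
    | zero =>
      intro n hn f hf
      rcases lt_or_eq_of_le hn with h | h
      · exact hJhw n (by omega) f hf
      · rw [← h]; exact base f hf
    | succ N ih =>
      intro n hn f hf
      rcases le_or_gt (-(N : ℤ)) n with h | h
      · exact ih n h f hf
      · have hneg : n < 0 := by omega
        exact key n hneg (fun m hm g hg => ih m (by omega) g hg) f hf
  refine ⟨?_, ?_⟩
  · intro k hk f hf b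
    exact ⟨(ann k hk f hf 1 one_pos b).1, (ann k hk f hf 2 two_pos b).1,
      (ann k hk f hf 1 one_pos b).2.1⟩
  · intro n f hf
    exact allN (-n).toNat n (by omega) f hf
end

section
/- For λ ∈ ℂ \ {0}, α ∈ ℂ, and μ = (μ₁,…,μ_k) ∈ ℂ^k, the formulas (d_n⊗b^r)·f(t) = μ^r·λ^{n-|r|}·f(t-n)·(t-nα) and (C⊗b^r)·f(t) = 0 define a module structure for Vir⊗ℂ[b₁,…,b_k] on the polynomial ring ℂ[t]. -/
open Polynomial

/-- The action of `d_n ⊗ b^r` on `ℂ[t]`: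
`(d_n ⊗ b^r) · f(t) = μ^r λ^{n-|r|} f(t-n)(t-nα)`. -/
noncomputable def Dop {k : ℕ} (lam alpha : ℂ) (mu : Fin k → ℂ)
    (n : ℤ) (r : Fin k → ℕ) (f : ℂ[X]) : ℂ[X] :=
  ((∏ i, mu i ^ r i) * lam ^ (n - ∑ i, (r i : ℤ))) •
    (f.comp (X - C (n : ℂ)) * (X - C ((n : ℂ) * alpha)))

/-- For `λ ≠ 0`, the formulas `(d_n ⊗ b^r)·f(t) = μ^r λ^{n-|r|} f(t-n)(t-nα)` and
`(C ⊗ b^r)·f = 0` define a module structure for `Vir ⊗ ℂ[b₁,…,b_k]` on `ℂ[t]`: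
each operator is linear and the Virasoro commutator relations hold (the central
term acts by zero). -/
theorem stmt15 {k : ℕ} (lam alpha : ℂ) (hlam : lam ≠ 0) (mu : Fin k → ℂ) :
    (∀ (n : ℤ) (r : Fin k → ℕ) (f g : ℂ[X]),
      Dop lam alpha mu n r (f + g) = Dop lam alpha mu n r f + Dop lam alpha mu n r g) ∧
    (∀ (n : ℤ) (r : Fin k → ℕ) (c : ℂ) (f : ℂ[X]),
      Dop lam alpha mu n r (c • f) = c • Dop lam alpha mu n r f) ∧
    (∀ (n m : ℤ) (r s : Fin k → ℕ) (f : ℂ[X]),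
      Dop lam alpha mu n r (Dop lam alpha mu m s f)
        - Dop lam alpha mu m s (Dop lam alpha mu n r f)
        = ((m : ℂ) - (n : ℂ)) • Dop lam alpha mu (n + m) (r + s) f) := by
  refine ⟨?_, ?_, ?_⟩
  · intro n r f g
    simp [Dop, add_comp, add_mul, smul_add]
  · intro n r c f
    simp only [Dop, smul_comp, smul_mul_assoc, smul_smul]
    rw [mul_comm]
  · intro n m r s f
    have key : ∀ a b : ℤ,
        (f.comp (X - C (b : ℂ)) * (X - C ((b : ℂ) * alpha))).comp (X - C (a : ℂ))
          * (X - C ((a : ℂ) * alpha))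
        = f.comp (X - C ((n + m : ℤ) : ℂ))
          * ((X - C (a : ℂ) - C ((b : ℂ) * alpha)) * (X - C ((a : ℂ) * alpha))) →
        True := fun _ _ _ => trivial
    clear key
    have hcomp : ∀ a b : ℤ, a + b = n + m →
        (f.comp (X - C (b : ℂ)) * (X - C ((b : ℂ) * alpha))).comp (X - C (a : ℂ))
        = f.comp (X - C ((n + m : ℤ) : ℂ)) * (X - C (a : ℂ) - C ((b : ℂ) * alpha)) := by
      intro a b hab
      rw [mul_comp, Polynomial.comp_assoc]
      simp only [sub_comp, X_comp, C_comp, sub_sub, ← C_add]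
      congr 3
      · push_cast [← hab]; ring
    have hs : ∀ a b : ℤ,
        ((∏ i, mu i ^ r i) * lam ^ (a - ∑ i, (r i : ℤ)))
          * ((∏ i, mu i ^ s i) * lam ^ (b - ∑ i, (s i : ℤ)))
        = (∏ i, mu i ^ (r + s) i) * lam ^ ((n + m) - ∑ i, ((r + s) i : ℤ)) → True :=
      fun _ _ _ => trivial
    clear hs
    have hS : ((∏ i, mu i ^ r i) * lam ^ (n - ∑ i, (r i : ℤ)))
          * ((∏ i, mu i ^ s i) * lam ^ (m - ∑ i, (s i : ℤ)))
        = (∏ i, mu i ^ (r + s) i) * lam ^ ((n + m) - ∑ i, ((r + s) i : ℤ)) := by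
      simp only [Pi.add_apply, pow_add, Finset.prod_mul_distrib, Nat.cast_add,
        Finset.sum_add_distrib]
      rw [mul_mul_mul_comm, ← zpow_add₀ hlam]
      congr 2
      ring
    simp only [Dop, smul_comp, smul_mul_assoc, smul_smul]
    rw [hcomp n m (by ring), hcomp m n (by ring), mul_comm
      ((∏ i, mu i ^ s i) * lam ^ (m - ∑ i, (s i : ℤ)))
      ((∏ i, mu i ^ r i) * lam ^ (n - ∑ i, (r i : ℤ))), hS, ← smul_sub]
    conv_rhs => rw [mul_comm, mul_smul]
    congr 1
    rw [Polynomial.smul_eq_C_mul]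
    simp only [Int.cast_add, C_add, C_mul, map_sub]
    ring
end

section
/- Let λ ∈ ℂ \ {0}, α, β ∈ ℂ, μ ∈ ℂ^k. The formulas (d_n⊗b^r)·f(t) = μ^r λ^{n-|r|} f(t-n)(t-nα), (I_n⊗b^r)·f(t) = μ^r λ^{n-|r|} β f(t-n), and C⊗b^r, C_D⊗b^r, C_I⊗b^r acting by zero, define a module structure for HV⊗ℂ[b₁,…,b_k] on ℂ[t]. This module Ω(λ,α,μ,β) is irreducible if and only if α ≠ 0 or β ≠ 0; when α = β = 0, t·ℂ[t] is a proper nonzero submodule. -/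
open Polynomial

/-- The action of `I_n ⊗ b^r` on `ℂ[t]`. -/
noncomputable def Iop {k : ℕ} (lam beta : ℂ) (mu : Fin k → ℂ)
    (n : ℤ) (r : Fin k → ℕ) (f : ℂ[X]) : ℂ[X] :=
  ((∏ i, mu i ^ r i) * lam ^ (n - ∑ i, (r i : ℤ)) * beta) • f.comp (X - C (n : ℂ))

namespace Stmt17Aux

variable {R : Type*} [CommRing R]

noncomputable def fdiff (P : R[X]) : R[X] := taylor 1 P - P

lemma coeff_fdiff (P : R[X]) (m : ℕ) (h : P.natDegree ≤ m + 1) :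
    (fdiff P).coeff m = (m + 1 : R) * P.coeff (m + 1) := by
  have h1 : ((hasseDeriv m) P).natDegree ≤ 1 :=
    le_trans (natDegree_hasseDeriv_le P m) (by omega)
  have h2 := eq_X_add_C_of_degree_le_one (natDegree_le_iff_degree_le.mp h1)
  rw [fdiff, coeff_sub, taylor_coeff, h2]
  rw [hasseDeriv_coeff, hasseDeriv_coeff] at h2 ⊢
  simp only [eval_add, eval_mul, eval_C, eval_X, mul_one]
  rw [show 1 + m = m + 1 from by omega, Nat.choose_succ_self_right, Nat.zero_add, Nat.choose_self]
  push_cast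
  ring

lemma natDegree_fdiff (P : R[X]) (m : ℕ) (h : P.natDegree ≤ m + 1) :
    (fdiff P).natDegree ≤ m := by
  rw [natDegree_le_iff_coeff_eq_zero]
  intro N hN
  rw [fdiff, coeff_sub, taylor_coeff, sub_eq_zero]
  have h1 : ((hasseDeriv N) P).natDegree ≤ 0 :=
    le_trans (natDegree_hasseDeriv_le P N) (by omega)
  rw [eq_C_of_natDegree_le_zero h1, eval_C, hasseDeriv_coeff]
  simp [Nat.choose_self]

lemma fdiff_iterate (m : ℕ) : ∀ P : R[X], P.natDegree ≤ m →
    fdiff^[m] P = C ((m.factorial : R) * P.coeff m) := by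
  induction m with
  | zero =>
    intro P h
    simpa using eq_C_of_natDegree_le_zero h
  | succ m ih =>
    intro P h
    rw [Function.iterate_succ_apply, ih (fdiff P) (natDegree_fdiff P m h),
      coeff_fdiff P m h]
    congr 1
    push_cast [Nat.factorial_succ]
    ring


lemma eval_fdiff (P : Polynomial ℂ[X]) (v : ℂ[X]) :
    (fdiff P).eval v = P.eval (v + 1) - P.eval v := by
  rw [fdiff, eval_sub, taylor_apply, eval_comp]
  simp

lemma eval_iterate_mem (W : Submodule ℂ ℂ[X]) (m : ℕ) :
    ∀ P : Polynomial ℂ[X], (∀ n : ℕ, P.eval (C (n : ℂ)) ∈ W) →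
      ∀ n : ℕ, (fdiff^[m] P).eval (C (n : ℂ)) ∈ W := by
  induction m with
  | zero => intro P h n; exact h n
  | succ m ih =>
    intro P h n
    rw [Function.iterate_succ_apply]
    refine ih (fdiff P) (fun j => ?_) n
    rw [eval_fdiff]
    have : (C (j : ℂ) + 1 : ℂ[X]) = C ((j + 1 : ℕ) : ℂ) := by
      push_cast; rw [map_add, map_one]
    rw [this]
    exact sub_mem (h (j + 1)) (h j)

lemma eval_aeval (f : ℂ[X]) (z : ℂ) :
    (Polynomial.aeval (C X - X : Polynomial ℂ[X]) f).eval (C z) = f.comp (X - C z) := by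
  induction f using Polynomial.induction_on with
  | C a => simp [Polynomial.algebraMap_apply]
  | add p q hp hq => simp [hp, hq, add_comp]
  | monomial n a ih =>
    simp only [pow_succ, ← mul_assoc, map_mul, eval_mul, mul_comp] at ih ⊢
    rw [ih]
    simp


lemma natDegree_aeval_le (f : ℂ[X]) :
    ((Polynomial.aeval (C X - X : Polynomial ℂ[X])) f).natDegree ≤ f.natDegree := by
  conv_lhs => rw [f.as_sum_range' (f.natDegree + 1) (Nat.lt_succ_self _)]
  rw [map_sum]
  refine le_trans (Polynomial.natDegree_sum_le _ _) ?_
  rw [Finset.fold_max_le]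
  refine ⟨Nat.zero_le _, fun i hi => ?_⟩
  simp only [Function.comp_apply]
  rw [Polynomial.aeval_monomial]
  refine le_trans (natDegree_mul_le) ?_
  have h1 : ((algebraMap ℂ (Polynomial ℂ[X])) (f.coeff i)).natDegree = 0 := by
    rw [Polynomial.algebraMap_apply]; exact natDegree_C _
  have h2 : ((C X - X : Polynomial ℂ[X]) ^ i).natDegree ≤ i := by
    refine le_trans (natDegree_pow_le) ?_
    have : (C X - X : Polynomial ℂ[X]).natDegree ≤ 1 :=
      le_trans (natDegree_sub_le _ _) (by simp)
    calc i * (C X - X : Polynomial ℂ[X]).natDegree ≤ i * 1 := Nat.mul_le_mul_left _ this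
      _ = i := mul_one i
  have := Finset.mem_range.mp hi
  omega

lemma coeff_pow_self (d : ℕ) :
    ((C X - X : Polynomial ℂ[X]) ^ d).coeff d = C ((-1 : ℂ) ^ d) := by
  have h : (C X - X : Polynomial ℂ[X]) ^ d = C ((C (-1 : ℂ)) ^ d) * (X - C X) ^ d := by
    rw [map_pow, ← mul_pow]
    congr 1
    simp [mul_sub]
    ring
  rw [h, coeff_C_mul]
  have hm : ((X - C (X : ℂ[X])) ^ d).Monic := (monic_X_sub_C _).pow d
  have hd : ((X - C (X : ℂ[X])) ^ d).natDegree = d := by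
    rw [natDegree_pow, natDegree_X_sub_C, mul_one]
  have hc := hm.coeff_natDegree
  rw [hd] at hc
  rw [hc, mul_one, ← map_pow]

lemma coeff_aeval (f : ℂ[X]) :
    ((Polynomial.aeval (C X - X : Polynomial ℂ[X])) f).coeff f.natDegree
      = C ((-1 : ℂ) ^ f.natDegree * f.leadingCoeff) := by
  set d := f.natDegree with hd
  conv_lhs => rw [f.as_sum_range' (d + 1) (Nat.lt_succ_self _)]
  rw [map_sum, finset_sum_coeff]
  rw [Finset.sum_eq_single d]
  · rw [Polynomial.aeval_monomial, Polynomial.algebraMap_apply, Polynomial.algebraMap_apply,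
      coeff_C_mul, coeff_pow_self]
    simp only [Algebra.algebraMap_self, map_id, RingHom.id_apply]
    rw [← map_mul, mul_comm]
    rfl
  · intro i hi hne
    rw [Polynomial.aeval_monomial]
    refine coeff_eq_zero_of_natDegree_lt ?_
    have h1 : ((algebraMap ℂ (Polynomial ℂ[X])) (f.coeff i)).natDegree = 0 := by
      rw [Polynomial.algebraMap_apply]; exact natDegree_C _
    have h2 : ((C X - X : Polynomial ℂ[X]) ^ i).natDegree ≤ i := by
      refine le_trans (natDegree_pow_le) ?_
      have : (C X - X : Polynomial ℂ[X]).natDegree ≤ 1 :=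
        le_trans (natDegree_sub_le _ _) (by simp)
      calc i * (C X - X : Polynomial ℂ[X]).natDegree ≤ i * 1 := Nat.mul_le_mul_left _ this
        _ = i := mul_one i
    have := Finset.mem_range.mp hi
    have := natDegree_mul_le (p := (algebraMap ℂ (Polynomial ℂ[X])) (f.coeff i))
      (q := (C X - X : Polynomial ℂ[X]) ^ i)
    omega
  · intro h
    exact absurd (Finset.self_mem_range_succ d) h


lemma one_mem_of_Q (W : Submodule ℂ ℂ[X]) (Q : Polynomial ℂ[X]) (m : ℕ)
    (hdeg : Q.natDegree ≤ m) (c : ℂ) (hc : c ≠ 0) (hco : Q.coeff m = C c)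
    (hev : ∀ n : ℕ, Q.eval (C (n : ℂ)) ∈ W) : (1 : ℂ[X]) ∈ W := by
  have h1 := eval_iterate_mem W m Q hev 0
  rw [fdiff_iterate m Q hdeg, hco, eval_C] at h1
  have h2 : ((m.factorial : ℂ[X]) * C c) = C ((m.factorial : ℂ) * c) := by
    rw [map_mul, map_natCast]
  rw [h2] at h1
  have h3 : ((m.factorial : ℂ) * c) ≠ 0 :=
    mul_ne_zero (Nat.cast_ne_zero.mpr m.factorial_ne_zero) hc
  have h4 := W.smul_mem (((m.factorial : ℂ) * c)⁻¹) h1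
  rwa [Polynomial.smul_C, smul_eq_mul, inv_mul_cancel₀ h3, map_one] at h4

lemma top_of (W : Submodule ℂ ℂ[X]) (h1 : (1 : ℂ[X]) ∈ W)
    (hX : ∀ f ∈ W, f * X ∈ W) : W = ⊤ := by
  have hpow : ∀ i : ℕ, (X : ℂ[X]) ^ i ∈ W := by
    intro i
    induction i with
    | zero => simpa using h1
    | succ i ih =>
      have := hX _ ih
      rwa [← pow_succ] at this
  rw [eq_top_iff]
  intro f _
  rw [f.as_sum_range' (f.natDegree + 1) (Nat.lt_succ_self _)]
  exact Submodule.sum_mem _ (fun i _ => by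
    rw [← smul_X_eq_monomial]; exact W.smul_mem _ (hpow i))


lemma coef_mul {k : ℕ} (lam : ℂ) (hlam : lam ≠ 0) (mu : Fin k → ℂ)
    (n m : ℤ) (r s : Fin k → ℕ) :
    ((∏ i, mu i ^ r i) * lam ^ (n - ∑ i, (r i : ℤ))) *
      ((∏ i, mu i ^ s i) * lam ^ (m - ∑ i, (s i : ℤ)))
    = (∏ i, mu i ^ (r + s) i) * lam ^ ((n + m) - ∑ i, ((r + s) i : ℤ)) := by
  have h1 : (∏ i, mu i ^ (r + s) i) = (∏ i, mu i ^ r i) * (∏ i, mu i ^ s i) := by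
    rw [← Finset.prod_mul_distrib]
    exact Finset.prod_congr rfl (fun i _ => by simp [Pi.add_apply, pow_add])
  have h2 : ((n + m) - ∑ i, ((r + s) i : ℤ))
      = (n - ∑ i, (r i : ℤ)) + (m - ∑ i, (s i : ℤ)) := by
    have h3 : ∑ i, ((r + s) i : ℤ) = (∑ i, (r i : ℤ)) + ∑ i, (s i : ℤ) := by
      rw [← Finset.sum_add_distrib]
      exact Finset.sum_congr rfl (fun i _ => by push_cast [Pi.add_apply]; ring)
    omega
  rw [h1, h2, zpow_add₀ hlam]
  ring

lemma part1 {k : ℕ} (lam alpha : ℂ) (hlam : lam ≠ 0) (mu : Fin k → ℂ)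
    (n m : ℤ) (r s : Fin k → ℕ) (f : ℂ[X]) :
    Dop lam alpha mu n r (Dop lam alpha mu m s f)
      - Dop lam alpha mu m s (Dop lam alpha mu n r f)
      = ((m : ℂ) - (n : ℂ)) • Dop lam alpha mu (n + m) (r + s) f := by
  simp only [Dop, smul_comp, mul_comp, sub_comp, X_comp, C_comp, comp_assoc,
    smul_mul_assoc, smul_smul]
  rw [← coef_mul lam hlam mu n m r s]
  have e1 : (X : ℂ[X]) - C (n : ℂ) - C (m : ℂ) = X - C (((n + m : ℤ) : ℂ)) := by
    push_cast [map_add]; ring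
  have e2 : (X : ℂ[X]) - C (m : ℂ) - C (n : ℂ) = X - C (((n + m : ℤ) : ℂ)) := by
    push_cast [map_add]; ring
  rw [e1, e2,
    mul_comm ((∏ i, mu i ^ s i) * lam ^ (m - ∑ i, (s i : ℤ)))
      ((∏ i, mu i ^ r i) * lam ^ (n - ∑ i, (r i : ℤ))),
    ← smul_sub]
  have key : f.comp (X - C (((n + m : ℤ) : ℂ))) * (X - C ((n : ℂ)) - C ((m : ℂ) * alpha)) *
        (X - C ((n : ℂ) * alpha))
      - f.comp (X - C (((n + m : ℤ) : ℂ))) * (X - C ((m : ℂ)) - C ((n : ℂ) * alpha)) *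
        (X - C ((m : ℂ) * alpha))
      = ((m : ℂ) - (n : ℂ)) •
        (f.comp (X - C (((n + m : ℤ) : ℂ))) * (X - C (((n + m : ℤ) : ℂ) * alpha))) := by
    rw [smul_eq_C_mul]
    push_cast
    simp only [map_sub, map_add, map_mul]
    ring
  rw [key, smul_smul, mul_comm ((∏ i, mu i ^ r i) * lam ^ (n - ∑ i, (r i : ℤ)) *
      ((∏ i, mu i ^ s i) * lam ^ (m - ∑ i, (s i : ℤ))))]


lemma part2 {k : ℕ} (lam alpha beta : ℂ) (hlam : lam ≠ 0) (mu : Fin k → ℂ)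
    (n m : ℤ) (r s : Fin k → ℕ) (f : ℂ[X]) :
    Dop lam alpha mu n r (Iop lam beta mu m s f)
      - Iop lam beta mu m s (Dop lam alpha mu n r f)
      = (m : ℂ) • Iop lam beta mu (m + n) (r + s) f := by
  simp only [Dop, Iop, smul_comp, mul_comp, sub_comp, X_comp, C_comp, comp_assoc,
    smul_mul_assoc, smul_smul]
  have hc : (∏ i, mu i ^ r i) * lam ^ (n - ∑ i, (r i : ℤ)) *
      ((∏ i, mu i ^ s i) * lam ^ (m - ∑ i, (s i : ℤ)) * beta)
      = (∏ i, mu i ^ (r + s) i) * lam ^ ((m + n) - ∑ i, ((r + s) i : ℤ)) * beta := by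
    rw [show (m + n : ℤ) = n + m from add_comm m n, ← coef_mul lam hlam mu n m r s]
    ring
  have hc2 : (∏ i, mu i ^ s i) * lam ^ (m - ∑ i, (s i : ℤ)) * beta *
      ((∏ i, mu i ^ r i) * lam ^ (n - ∑ i, (r i : ℤ)))
      = (∏ i, mu i ^ (r + s) i) * lam ^ ((m + n) - ∑ i, ((r + s) i : ℤ)) * beta := by
    rw [← hc]; ring
  rw [hc, hc2, ← smul_sub]
  have e1 : (X : ℂ[X]) - C (m : ℂ) - C (n : ℂ) = X - C (((m + n : ℤ) : ℂ)) := by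
    push_cast [map_add]; ring
  have e2 : (X : ℂ[X]) - C (n : ℂ) - C (m : ℂ) = X - C (((m + n : ℤ) : ℂ)) := by
    push_cast [map_add]; ring
  rw [e1, e2]
  have key : f.comp (X - C (((m + n : ℤ) : ℂ))) * (X - C ((n : ℂ) * alpha))
      - f.comp (X - C (((m + n : ℤ) : ℂ))) * (X - C (m : ℂ) - C ((n : ℂ) * alpha))
      = (m : ℂ) • f.comp (X - C (((m + n : ℤ) : ℂ))) := by
    rw [smul_eq_C_mul]
    ring
  rw [key, smul_smul, mul_comm ((∏ i, mu i ^ (r + s) i) *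
    lam ^ ((m + n) - ∑ i, ((r + s) i : ℤ)) * beta) ((m : ℂ))]

lemma part3 {k : ℕ} (lam beta : ℂ) (mu : Fin k → ℂ)
    (n m : ℤ) (r s : Fin k → ℕ) (f : ℂ[X]) :
    Iop lam beta mu n r (Iop lam beta mu m s f)
      - Iop lam beta mu m s (Iop lam beta mu n r f) = 0 := by
  simp only [Iop, smul_comp, comp_assoc, sub_comp, X_comp, C_comp, smul_smul]
  rw [sub_eq_zero]
  have e : (X : ℂ[X]) - C (m : ℂ) - C (n : ℂ) = X - C (n : ℂ) - C (m : ℂ) := by ring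
  rw [e]
  ring_nf


lemma Dop_zero {k : ℕ} (lam alpha : ℂ) (mu : Fin k → ℂ) (n : ℤ) (f : ℂ[X]) :
    Dop lam alpha mu n 0 f
      = lam ^ n • (f.comp (X - C (n : ℂ)) * (X - C ((n : ℂ) * alpha))) := by
  simp [Dop]

lemma Iop_zero {k : ℕ} (lam beta : ℂ) (mu : Fin k → ℂ) (n : ℤ) (f : ℂ[X]) :
    Iop lam beta mu n 0 f = (lam ^ n * beta) • f.comp (X - C (n : ℂ)) := by
  simp [Iop]

lemma Dop_zero_zero {k : ℕ} (lam alpha : ℂ) (mu : Fin k → ℂ) (f : ℂ[X]) :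
    Dop lam alpha mu 0 0 f = f * X := by
  simp [Dop]

/-- From an invariant submodule containing a nonzero element, `1 ∈ W`. -/
lemma one_mem {k : ℕ} (lam alpha beta : ℂ) (hlam : lam ≠ 0) (mu : Fin k → ℂ)
    (hab : alpha ≠ 0 ∨ beta ≠ 0) (W : Submodule ℂ ℂ[X])
    (hW : ∀ (n : ℤ) (r : Fin k → ℕ), ∀ f ∈ W,
      Dop lam alpha mu n r f ∈ W ∧ Iop lam beta mu n r f ∈ W)
    (f : ℂ[X]) (hfW : f ∈ W) (hf0 : f ≠ 0) : (1 : ℂ[X]) ∈ W := by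
  have ha0 : f.leadingCoeff ≠ 0 := leadingCoeff_ne_zero.mpr hf0
  rcases hab with hα | hβ
  · -- use D operators
    refine one_mem_of_Q W
      ((Polynomial.aeval (C X - X : Polynomial ℂ[X])) f * (C X - C (C alpha) * X))
      (f.natDegree + 1) ?_
      ((-1 : ℂ) ^ (f.natDegree + 1) * f.leadingCoeff * alpha)
      (mul_ne_zero (mul_ne_zero (pow_ne_zero _ (neg_ne_zero.mpr one_ne_zero)) ha0) hα)
      ?_ ?_
    · refine le_trans (natDegree_mul_le) ?_
      have h1 : (C X - C (C alpha) * X : Polynomial ℂ[X]).natDegree ≤ 1 := by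
        refine le_trans (natDegree_sub_le _ _) ?_
        simp only [natDegree_C, max_le_iff]
        exact ⟨Nat.zero_le _, le_trans (natDegree_mul_le) (by simp)⟩
      have h2 := natDegree_aeval_le f
      omega
    · rw [mul_sub, coeff_sub, ← mul_assoc, coeff_mul_C, coeff_mul_X,
        coeff_eq_zero_of_natDegree_lt
          (lt_of_le_of_lt (natDegree_aeval_le f) (Nat.lt_succ_self f.natDegree)),
        zero_mul, coeff_mul_C, zero_sub, coeff_aeval f, ← map_mul, ← map_neg]
      congr 1
      rw [pow_succ]
      ring
    · intro n
      have hmem := (hW (n : ℤ) 0 f hfW).1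
      rw [Dop_zero] at hmem
      have hz : (lam ^ (n : ℤ)) ≠ 0 := zpow_ne_zero _ hlam
      have hsc := W.smul_mem ((lam ^ (n : ℤ))⁻¹) hmem
      rw [smul_smul, inv_mul_cancel₀ hz, one_smul] at hsc
      have e : (C X - C (C alpha) * X : Polynomial ℂ[X]).eval (C ((n : ℂ)))
          = X - C ((n : ℂ) * alpha) := by
        rw [eval_sub, eval_C, eval_mul, eval_C, eval_X, map_mul]
        ring
      rw [eval_mul, eval_aeval, e]
      push_cast at hsc ⊢
      exact hsc
  · -- use I operators
    refine one_mem_of_Q W ((Polynomial.aeval (C X - X : Polynomial ℂ[X])) f)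
      f.natDegree (natDegree_aeval_le f) ((-1 : ℂ) ^ f.natDegree * f.leadingCoeff)
      (mul_ne_zero (pow_ne_zero _ (neg_ne_zero.mpr one_ne_zero)) ha0)
      (coeff_aeval f) ?_
    intro n
    have hmem := (hW (n : ℤ) 0 f hfW).2
    rw [Iop_zero] at hmem
    have hz : (lam ^ (n : ℤ) * beta) ≠ 0 := mul_ne_zero (zpow_ne_zero _ hlam) hβ
    have hsc := W.smul_mem ((lam ^ (n : ℤ) * beta)⁻¹) hmem
    rw [smul_smul, inv_mul_cancel₀ hz, one_smul] at hsc
    rw [eval_aeval]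
    push_cast at hsc ⊢
    exact hsc


lemma part5 {k : ℕ} (lam : ℂ) (mu : Fin k → ℂ) :
    (∀ (n : ℤ) (r : Fin k → ℕ), ∀ f ∈ (Ideal.span {(X : ℂ[X])}).restrictScalars ℂ,
        Dop lam 0 mu n r f ∈ (Ideal.span {(X : ℂ[X])}).restrictScalars ℂ ∧
        Iop lam 0 mu n r f ∈ (Ideal.span {(X : ℂ[X])}).restrictScalars ℂ) ∧
      (Ideal.span {(X : ℂ[X])}).restrictScalars ℂ ≠ ⊥ ∧
      (Ideal.span {(X : ℂ[X])}).restrictScalars ℂ ≠ ⊤ := by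
  refine ⟨fun n r f _ => ⟨?_, ?_⟩, ?_, ?_⟩
  · show Dop lam 0 mu n r f ∈ Ideal.span {(X : ℂ[X])}
    rw [Ideal.mem_span_singleton, Dop, smul_eq_C_mul]
    exact Dvd.dvd.mul_left (by rw [mul_zero, map_zero, sub_zero]; exact dvd_mul_left X _) _
  · show Iop lam 0 mu n r f ∈ Ideal.span {(X : ℂ[X])}
    rw [Iop, mul_zero, zero_smul]
    exact Submodule.zero_mem _
  · intro h
    have hX : (X : ℂ[X]) ∈ (Ideal.span {(X : ℂ[X])}).restrictScalars ℂ := by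
      show (X : ℂ[X]) ∈ Ideal.span {(X : ℂ[X])}
      exact Ideal.subset_span rfl
    rw [h] at hX
    exact X_ne_zero (Submodule.mem_bot ℂ |>.mp hX)
  · intro h
    have h1 : (1 : ℂ[X]) ∈ (Ideal.span {(X : ℂ[X])}).restrictScalars ℂ := by
      rw [h]; trivial
    have : (X : ℂ[X]) ∣ 1 := Ideal.mem_span_singleton.mp h1
    exact Polynomial.not_isUnit_X (isUnit_of_dvd_one this)

lemma part4 {k : ℕ} (lam alpha beta : ℂ) (hlam : lam ≠ 0) (mu : Fin k → ℂ) :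
    (∀ W : Submodule ℂ ℂ[X],
        (∀ (n : ℤ) (r : Fin k → ℕ), ∀ f ∈ W,
          Dop lam alpha mu n r f ∈ W ∧ Iop lam beta mu n r f ∈ W) →
        W = ⊥ ∨ W = ⊤)
      ↔ (alpha ≠ 0 ∨ beta ≠ 0) := by
  constructor
  · intro h
    by_contra hc
    push_neg at hc
    obtain ⟨hα, hβ⟩ := hc
    subst hα hβ
    obtain ⟨hinv, hbot, htop⟩ := part5 lam mu
    rcases h _ hinv with h' | h' <;> [exact hbot h'; exact htop h']
  · intro hab W hW
    by_cases hb : W = ⊥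
    · exact Or.inl hb
    · right
      obtain ⟨f, hfW, hf0⟩ := (Submodule.ne_bot_iff W).mp hb
      refine top_of W (one_mem lam alpha beta hlam mu hab W hW f hfW hf0) ?_
      intro g hg
      have := (hW 0 0 g hg).1
      rwa [Dop_zero_zero] at this


end Stmt17Aux

/-- For `λ ≠ 0`, the formulas `(d_n ⊗ b^r)·f = μ^r λ^{n-|r|} f(t-n)(t-nα)`,
`(I_n ⊗ b^r)·f = μ^r λ^{n-|r|} β f(t-n)` and central elements acting by zero
define an `HV ⊗ ℂ[b₁,…,b_k]`-module structure `Ω(λ,α,μ,β)` on `ℂ[t]` (all the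
commutator relations hold). This module is irreducible iff `α ≠ 0` or `β ≠ 0`;
when `α = β = 0`, `t·ℂ[t]` is a proper nonzero submodule. -/
theorem stmt17 {k : ℕ} (lam alpha beta : ℂ) (hlam : lam ≠ 0) (mu : Fin k → ℂ) :
    (∀ (n m : ℤ) (r s : Fin k → ℕ) (f : ℂ[X]),
      Dop lam alpha mu n r (Dop lam alpha mu m s f)
        - Dop lam alpha mu m s (Dop lam alpha mu n r f)
        = ((m : ℂ) - (n : ℂ)) • Dop lam alpha mu (n + m) (r + s) f) ∧
    (∀ (n m : ℤ) (r s : Fin k → ℕ) (f : ℂ[X]),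
      Dop lam alpha mu n r (Iop lam beta mu m s f)
        - Iop lam beta mu m s (Dop lam alpha mu n r f)
        = (m : ℂ) • Iop lam beta mu (m + n) (r + s) f) ∧
    (∀ (n m : ℤ) (r s : Fin k → ℕ) (f : ℂ[X]),
      Iop lam beta mu n r (Iop lam beta mu m s f)
        - Iop lam beta mu m s (Iop lam beta mu n r f) = 0) ∧
    ((∀ W : Submodule ℂ ℂ[X],
        (∀ (n : ℤ) (r : Fin k → ℕ), ∀ f ∈ W,
          Dop lam alpha mu n r f ∈ W ∧ Iop lam beta mu n r f ∈ W) →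
        W = ⊥ ∨ W = ⊤)
      ↔ (alpha ≠ 0 ∨ beta ≠ 0)) ∧
    (alpha = 0 → beta = 0 →
      (∀ (n : ℤ) (r : Fin k → ℕ), ∀ f ∈ (Ideal.span {(X : ℂ[X])}).restrictScalars ℂ,
        Dop lam alpha mu n r f ∈ (Ideal.span {(X : ℂ[X])}).restrictScalars ℂ ∧
        Iop lam beta mu n r f ∈ (Ideal.span {(X : ℂ[X])}).restrictScalars ℂ) ∧
      (Ideal.span {(X : ℂ[X])}).restrictScalars ℂ ≠ ⊥ ∧
      (Ideal.span {(X : ℂ[X])}).restrictScalars ℂ ≠ ⊤) :=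
  ⟨fun n m r s f => Stmt17Aux.part1 lam alpha hlam mu n m r s f,
   fun n m r s f => Stmt17Aux.part2 lam alpha beta hlam mu n m r s f,
   fun n m r s f => Stmt17Aux.part3 lam beta mu n m r s f,
   Stmt17Aux.part4 lam alpha beta hlam mu,
   fun ha hb => by subst ha; subst hb; exact Stmt17Aux.part5 lam mu⟩
end

section
/- Two modules Ω(λ,α,μ,β) and Ω(λ',α',μ',β') over the map Heisenberg–Virasoro algebra HV⊗ℂ[b₁,…,b_k] are isomorphic if and only if λ=λ', α=α', μ=μ', and β=β'. -/
open Polynomial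

/-!
An isomorphism `e` commutes with `d_0`, i.e. with multiplication by `t`, so it is
multiplication by the polynomial `e 1`; as `e` is bijective, `e 1` is a unit, i.e. a nonzero
constant `c`. Since all the operators commute with multiplication by constants, `e` then
intertwines the actions only if the two actions coincide, and the parameters are read off
from the action on `1`: `d_1` gives `λ(t - α)`, `d_1 ⊗ b_i` gives `μ_i(t - α)` and `I_0`
gives `β`.
-/

namespace Polynomial

variable {R : Type*}

theorem map_eq_mul_map_one_of_map_mul_X [CommSemiring R] (φ : R[X] →ₗ[R] R[X])
    (hX : ∀ f, φ (f * X) = φ f * X) (f : R[X]) : φ f = f * φ 1 := by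
  induction f using Polynomial.induction_on with
  | C a => simpa only [smul_eq_C_mul, mul_one] using φ.map_smul a 1
  | add p q hp hq => rw [map_add, hp, hq, add_mul]
  | monomial n a ih => rw [pow_succ, ← mul_assoc, hX, ih, mul_right_comm]

theorem exists_isUnit_forall_eq_mul_C [CommRing R] [IsDomain R] (e : R[X] ≃ₗ[R] R[X])
    (hX : ∀ f, e (f * X) = e f * X) : ∃ c : R, IsUnit c ∧ ∀ f, e f = f * C c := by
  have hmul := map_eq_mul_map_one_of_map_mul_X e.toLinearMap hX
  obtain ⟨g, hg⟩ := e.surjective 1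
  have hunit : IsUnit (e 1) :=
    IsUnit.of_mul_eq_one g ((mul_comm _ _).trans ((hmul g).symm.trans hg))
  obtain ⟨c, hc, hce⟩ := isUnit_iff.mp hunit
  exact ⟨c, hc, fun f => by rw [hce]; exact hmul f⟩

end Polynomial

section Operators

variable {k : ℕ} (lam alpha beta : ℂ) (mu : Fin k → ℂ) (n : ℤ) (r : Fin k → ℕ)

theorem Dop_zero_zero (f : ℂ[X]) : Dop lam alpha mu 0 0 f = f * X := by
  simp [Dop]

theorem Dop_mul_C (f : ℂ[X]) (c : ℂ) :
    Dop lam alpha mu n r (f * C c) = Dop lam alpha mu n r f * C c := by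
  simp only [Dop, mul_comp, C_comp, smul_eq_C_mul]
  ring

theorem Iop_mul_C (f : ℂ[X]) (c : ℂ) :
    Iop lam beta mu n r (f * C c) = Iop lam beta mu n r f * C c := by
  simp only [Iop, mul_comp, C_comp, smul_eq_C_mul]
  ring

theorem coeff_one_Dop_one :
    (Dop lam alpha mu n r 1).coeff 1 = (∏ i, mu i ^ r i) * lam ^ (n - ∑ i, (r i : ℤ)) := by
  simp only [Dop, one_comp, one_mul, coeff_smul, coeff_sub, coeff_X_one, coeff_C, smul_eq_mul]
  simp

theorem coeff_zero_Dop_one :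
    (Dop lam alpha mu n r 1).coeff 0 =
      -((∏ i, mu i ^ r i) * lam ^ (n - ∑ i, (r i : ℤ)) * (n * alpha)) := by
  simp only [Dop, one_comp, one_mul, coeff_smul, coeff_sub, coeff_X_zero, coeff_C, smul_eq_mul]
  simp

theorem coeff_zero_Iop_one :
    (Iop lam beta mu n r 1).coeff 0 = (∏ i, mu i ^ r i) * lam ^ (n - ∑ i, (r i : ℤ)) * beta := by
  simp [Iop]

end Operators

theorem eq_of_forall_Dop_one_eq {k : ℕ} {lam lam' alpha alpha' : ℂ} {mu mu' : Fin k → ℂ}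
    (hlam : lam ≠ 0) (h : ∀ n r, Dop lam alpha mu n r 1 = Dop lam' alpha' mu' n r 1) :
    lam = lam' ∧ alpha = alpha' ∧ mu = mu' := by
  have hl : lam = lam' := by
    simpa [coeff_one_Dop_one] using congrArg (coeff · 1) (h 1 0)
  subst hl
  have ha : lam * alpha = lam * alpha' := by
    simpa [coeff_zero_Dop_one] using congrArg (coeff · 0) (h 1 0)
  refine ⟨rfl, mul_left_cancel₀ hlam ha, funext fun i => ?_⟩
  simpa [coeff_one_Dop_one, Pi.single_apply] using congrArg (coeff · 1) (h 1 (Pi.single i 1))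

theorem eq_of_Iop_one_eq {k : ℕ} {lam lam' beta beta' : ℂ} {mu mu' : Fin k → ℂ}
    (h : Iop lam beta mu 0 0 1 = Iop lam' beta' mu' 0 0 1) : beta = beta' := by
  simpa [coeff_zero_Iop_one] using congrArg (coeff · 0) h

theorem stmt18_general {k : ℕ} (lam lam' alpha alpha' beta beta' : ℂ)
    (hlam : lam ≠ 0) (mu mu' : Fin k → ℂ) :
    (∃ e : ℂ[X] ≃ₗ[ℂ] ℂ[X], ∀ (n : ℤ) (r : Fin k → ℕ) (f : ℂ[X]),
        e (Dop lam alpha mu n r f) = Dop lam' alpha' mu' n r (e f) ∧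
        e (Iop lam beta mu n r f) = Iop lam' beta' mu' n r (e f))
      ↔ (lam = lam' ∧ alpha = alpha' ∧ mu = mu' ∧ beta = beta') := by
  constructor
  · rintro ⟨e, he⟩
    obtain ⟨c, hc, hec⟩ := exists_isUnit_forall_eq_mul_C e fun f => by
      simpa only [Dop_zero_zero] using (he 0 0 f).1
    have hcancel := @(isUnit_C.mpr hc).mul_left_inj
    have hD : ∀ n r, Dop lam alpha mu n r 1 = Dop lam' alpha' mu' n r 1 := fun n r => by
      simpa only [hec, Dop_mul_C, hcancel] using (he n r 1).1
    have hI : Iop lam beta mu 0 0 1 = Iop lam' beta' mu' 0 0 1 := by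
      simpa only [hec, Iop_mul_C, hcancel] using (he 0 0 1).2
    obtain ⟨rfl, rfl, rfl⟩ := eq_of_forall_Dop_one_eq hlam hD
    exact ⟨rfl, rfl, rfl, eq_of_Iop_one_eq hI⟩
  · rintro ⟨rfl, rfl, rfl, rfl⟩
    exact ⟨LinearEquiv.refl ℂ ℂ[X], fun _ _ _ => ⟨rfl, rfl⟩⟩

/-- Two modules `Ω(λ,α,μ,β)` and `Ω(λ',α',μ',β')` over the map Heisenberg–Virasoro
algebra `HV ⊗ ℂ[b₁,…,b_k]` are isomorphic (i.e., there is a ℂ-linear equivalence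
of `ℂ[t]` intertwining all the actions; central elements act by zero on both)
iff `λ = λ'`, `α = α'`, `μ = μ'` and `β = β'`. -/
theorem stmt18 {k : ℕ} (lam lam' alpha alpha' beta beta' : ℂ)
    (hlam : lam ≠ 0) (hlam' : lam' ≠ 0) (mu mu' : Fin k → ℂ) :
    (∃ e : ℂ[X] ≃ₗ[ℂ] ℂ[X], ∀ (n : ℤ) (r : Fin k → ℕ) (f : ℂ[X]),
        e (Dop lam alpha mu n r f) = Dop lam' alpha' mu' n r (e f) ∧
        e (Iop lam beta mu n r f) = Iop lam' beta' mu' n r (e f))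
      ↔ (lam = lam' ∧ alpha = alpha' ∧ mu = mu' ∧ beta = beta') :=
  stmt18_general lam lam' alpha alpha' beta beta' hlam mu mu'
end
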